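/- arXiv:1102.5456 — 6 statements merged into one kernel-verified Lean document; each statement's English description precedes it below -/
import Mathlib

section
/- In a discrete semimodular lattice, for any two elements x and y with x ≤ y, all maximal chains of the interval [x, y] have the same finite number of elements distinct from x (so the height h(x,y) of y above x is well defined). -/
/-- A maximal chain of the interval `[x, y]`. -/
def MaxChainIn {α : Type*} [Lattice α] (x y : α) (C : Set α) : Prop :=
  C ⊆ Set.Icc x y ∧ IsChain (· ≤ ·) C ∧
    ∀ D : Set α, D ⊆ Set.Icc x y → IsChain (· ≤ ·) D → C ⊆ D → C = D

/-- A lattice is discrete if every interval contains a finite maximal chain. -/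
def IsDiscreteLattice (α : Type*) [Lattice α] : Prop :=
  ∀ x y : α, x ≤ y → ∃ C : Set α, MaxChainIn x y C ∧ C.Finite

/-- Semimodularity (lower covering condition): if `x` covers `x ⊓ y` then `x ⊔ y` covers `y`. -/
def IsSemimodular (α : Type*) [Lattice α] : Prop :=
  ∀ x y : α, (x ⊓ y) ⋖ x → y ⋖ (x ⊔ y)

/-- `x ∼ y` iff some `z` is covered by both `x` and `y`. -/
def Sim {α : Type*} [Lattice α] (x y : α) : Prop :=
  ∃ z : α, z ⋖ x ∧ z ⋖ y

/-- The level equivalence: reflexive-transitive closure of `Sim`. -/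
def LevelEquiv {α : Type*} [Lattice α] (x y : α) : Prop :=
  Relation.ReflTransGen Sim x y

section Aux

variable {α : Type*} [Lattice α]

lemma maxChain_left_mem {x y : α} {C : Set α} (hxy : x ≤ y) (h : MaxChainIn x y C) :
    x ∈ C := by
  have hsub : insert x C ⊆ Set.Icc x y := Set.insert_subset ⟨le_refl x, hxy⟩ h.1
  have hchain : IsChain (· ≤ ·) (insert x C) :=
    h.2.1.insert (fun b hb _ => Or.inl (h.1 hb).1)
  have heq := h.2.2 _ hsub hchain (Set.subset_insert _ _)
  rw [heq]; exact Set.mem_insert _ _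

lemma maxChain_right_mem {x y : α} {C : Set α} (hxy : x ≤ y) (h : MaxChainIn x y C) :
    y ∈ C := by
  have hsub : insert y C ⊆ Set.Icc x y := Set.insert_subset ⟨hxy, le_refl y⟩ h.1
  have hchain : IsChain (· ≤ ·) (insert y C) :=
    h.2.1.insert (fun b hb _ => Or.inr (h.1 hb).2)
  have heq := h.2.2 _ hsub hchain (Set.subset_insert _ _)
  rw [heq]; exact Set.mem_insert _ _

/-- Key lemma: if `[x,y]` has a finite maximal chain with `k` elements above `x`, then
every chain in `[x,y]` is finite with at most `k+1` elements. -/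
lemma key_bound (hs : IsSemimodular α) :
    ∀ k : ℕ, ∀ x y : α, x ≤ y → ∀ C : Set α, MaxChainIn x y C → C.Finite →
      (C \ {x}).ncard = k →
      ∀ D : Set α, D ⊆ Set.Icc x y → IsChain (· ≤ ·) D → D.Finite ∧ D.ncard ≤ k + 1 := by
  intro k
  induction k with
  | zero =>
    intro x y hxy C hC hCfin hk D hD _
    have hyC := maxChain_right_mem hxy hC
    have hempty : C \ {x} = ∅ := (Set.ncard_eq_zero (hCfin.diff)).mp hk
    have hyx : y = x := by
      by_contra hne
      have : y ∈ C \ {x} := ⟨hyC, hne⟩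
      rw [hempty] at this; exact this
    rw [hyx, Set.Icc_self] at hD
    refine ⟨(Set.finite_singleton x).subset hD, ?_⟩
    calc D.ncard ≤ ({x} : Set α).ncard :=
          Set.ncard_le_ncard hD (Set.finite_singleton x)
      _ = 1 := Set.ncard_singleton x
  | succ k ih =>
    intro x y hxy C hC hCfin hk D hD hDchain
    have hxC := maxChain_left_mem hxy hC
    -- the chain `C \ {x}` is nonempty; take its least element `a`
    have hne : (C \ {x}).Nonempty := Set.nonempty_of_ncard_ne_zero (by omega)
    obtain ⟨a, haC, hamin⟩ : ∃ a ∈ C \ {x}, ∀ b ∈ C \ {x}, b ≤ a → a = b := by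
      obtain ⟨a, ha⟩ := (hCfin.diff).exists_minimal hne
      exact ⟨a, ha.prop, fun b hb hba => le_antisymm (ha.le_of_le hb hba) hba⟩
    have haleast : ∀ b ∈ C \ {x}, a ≤ b := by
      intro b hb
      rcases eq_or_ne a b with h | h
      · exact h.le
      · rcases hC.2.1 haC.1 hb.1 h with h' | h'
        · exact h'
        · exact (hamin b hb h').le
    have haIcc : a ∈ Set.Icc x y := hC.1 haC.1
    have hxa : x < a := lt_of_le_of_ne haIcc.1 (fun h => haC.2 h.symm)
    have hay : a ≤ y := haIcc.2
    -- `x ⋖ a`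
    have hcov : x ⋖ a := by
      refine ⟨hxa, fun z hxz hza => ?_⟩
      have hzC : z ∉ C := by
        intro hzc
        rcases eq_or_ne z x with h | h
        · exact absurd (h ▸ hxz) (lt_irrefl x)
        · exact absurd (haleast z ⟨hzc, h⟩) (not_le_of_gt hza)
      have hsub : insert z C ⊆ Set.Icc x y :=
        Set.insert_subset ⟨hxz.le, hza.le.trans hay⟩ hC.1
      have hchain : IsChain (· ≤ ·) (insert z C) := by
        refine hC.2.1.insert (fun b hb _ => ?_)
        rcases eq_or_ne b x with h | h
        · exact Or.inr (h ▸ hxz.le)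
        · exact Or.inl (hza.le.trans (haleast b ⟨hb, h⟩))
      have heq := hC.2.2 _ hsub hchain (Set.subset_insert _ _)
      exact hzC (heq ▸ Set.mem_insert _ _)
    -- `C \ {x}` is a maximal chain in `[a, y]`
    have hC' : MaxChainIn a y (C \ {x}) := by
      refine ⟨fun c hc => ⟨haleast c hc, (hC.1 hc.1).2⟩, hC.2.1.mono Set.diff_subset, ?_⟩
      intro E hE hEchain hCE
      have hxE : ∀ e ∈ E, x < e := fun e he => lt_of_lt_of_le hxa (hE he).1
      have hsub : insert x E ⊆ Set.Icc x y :=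
        Set.insert_subset ⟨le_refl x, hxy⟩ (fun e he => ⟨(hxE e he).le, (hE he).2⟩)
      have hchain : IsChain (· ≤ ·) (insert x E) :=
        hEchain.insert (fun b hb _ => Or.inl (hxE b hb).le)
      have hCsub : C ⊆ insert x E := by
        intro c hc
        rcases eq_or_ne c x with h | h
        · exact h ▸ Set.mem_insert _ _
        · exact Set.mem_insert_of_mem _ (hCE ⟨hc, h⟩)
      have heq := hC.2.2 _ hsub hchain hCsub
      apply Set.Subset.antisymm hCE
      intro e he
      have heC : e ∈ C := heq ▸ Set.mem_insert_of_mem _ he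
      exact ⟨heC, fun h => absurd (h ▸ hxE e he) (lt_irrefl x)⟩
    have hk' : ((C \ {x}) \ {a}).ncard = k := by
      rw [Set.ncard_diff_singleton_of_mem haC, hk]
      omega
    -- the image chain `E = (a ⊔ ·) '' D` in `[a, y]`
    set f : α → α := fun d => a ⊔ d with hf
    set E : Set α := f '' D with hEdef
    have hEsub : E ⊆ Set.Icc a y := by
      rintro _ ⟨d, hd, rfl⟩
      exact ⟨le_sup_left, sup_le hay (hD hd).2⟩
    have hEchain : IsChain (· ≤ ·) E :=
      IsChain.image_of_map_rel _ _ _ (fun u v huv => sup_le_sup_left huv a) hDchain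
    obtain ⟨hEfin, hEcard⟩ :=
      ih a y hay (C \ {x}) hC' (hCfin.diff) hk' E hEsub hEchain
    -- collapse analysis
    have collapse : ∀ d ∈ D, ∀ d' ∈ D, d < d' → a ⊔ d = a ⊔ d' →
        ¬ a ≤ d ∧ a ≤ d' ∧ d ⋖ d' := by
      intro d hd d' hd' hlt heq
      have had : ¬ a ≤ d := by
        intro h
        have h1 : a ⊔ d = d := sup_eq_right.mpr h
        have h2 : d' ≤ a ⊔ d' := le_sup_right
        rw [← heq, h1] at h2
        exact absurd h2 (not_le_of_gt hlt)
      have hinf : a ⊓ d = x := by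
        have h1 : x ≤ a ⊓ d := le_inf hxa.le (hD hd).1
        have h2 : a ⊓ d < a := lt_of_le_of_ne inf_le_left (fun h => had (inf_eq_left.mp h))
        by_contra h
        exact hcov.2 (lt_of_le_of_ne h1 (Ne.symm h)) h2
      have hdc : d ⋖ a ⊔ d := hs a d (by rw [hinf]; exact hcov)
      have hd'eq : d' = a ⊔ d := by
        have h1 : d' ≤ a ⊔ d := heq ▸ le_sup_right
        by_contra h
        exact hdc.2 hlt (lt_of_le_of_ne h1 h)
      refine ⟨had, hd'eq ▸ le_sup_left, hd'eq ▸ hdc⟩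
    -- the set of "tops of collapses" has at most one element
    set T : Set α := {d | d ∈ D ∧ ∃ d' ∈ D, d' < d ∧ a ⊔ d' = a ⊔ d} with hT
    have hTsub : T ⊆ D := fun t ht => ht.1
    have hTss : T.Subsingleton := by
      intro t1 h1 t2 h2
      by_contra hne
      wlog hlt : t1 < t2 generalizing t1 t2
      · rcases hDchain (hTsub h1) (hTsub h2) hne with h | h
        · exact this h1 h2 hne (lt_of_le_of_ne h hne)
        · exact this h2 h1 (Ne.symm hne) (lt_of_le_of_ne h (Ne.symm hne))
      obtain ⟨ht1D, d1, hd1D, hd1lt, hd1eq⟩ := h1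
      obtain ⟨ht2D, d2, hd2D, hd2lt, hd2eq⟩ := h2
      obtain ⟨_, hat1, _⟩ := collapse d1 hd1D t1 ht1D hd1lt hd1eq
      obtain ⟨had2, _, hd2cov⟩ := collapse d2 hd2D t2 ht2D hd2lt hd2eq
      -- compare d2 and t1
      have hd2t1 : d2 < t1 := by
        rcases eq_or_ne d2 t1 with h | h
        · exact absurd (h ▸ hat1) had2
        rcases hDchain hd2D ht1D h with h' | h'
        · exact lt_of_le_of_ne h' h
        · exact absurd (hat1.trans h') had2
      exact hd2cov.2 hd2t1 hlt
    -- `f` is injective on `D \ T`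
    have hinj : Set.InjOn f (D \ T) := by
      intro d hd d' hd' heq
      by_contra hne
      wlog hlt : d < d' generalizing d d'
      · rcases hDchain hd.1 hd'.1 hne with h | h
        · exact this hd hd' heq hne (lt_of_le_of_ne h hne)
        · exact this hd' hd heq.symm (Ne.symm hne) (lt_of_le_of_ne h (Ne.symm hne))
      exact hd'.2 ⟨hd'.1, d, hd.1, hlt, heq⟩
    have himg : f '' (D \ T) ⊆ E := Set.image_mono Set.diff_subset
    have hDTfin : (D \ T).Finite :=
      Set.Finite.of_finite_image (hEfin.subset himg) hinj
    have hTfin : T.Finite := hTss.finite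
    have hDfin : D.Finite := by
      have : D ⊆ (D \ T) ∪ T := by
        intro d hd
        by_cases h : d ∈ T
        · exact Or.inr h
        · exact Or.inl ⟨hd, h⟩
      exact (hDTfin.union hTfin).subset this
    refine ⟨hDfin, ?_⟩
    have h1 : (D \ T).ncard ≤ E.ncard := by
      rw [← Set.ncard_image_of_injOn hinj]
      exact Set.ncard_le_ncard himg hEfin
    have h2 : T.ncard ≤ 1 := by
      rcases Set.eq_empty_or_nonempty T with h | ⟨t, ht⟩
      · simp [h]
      · have hsub : T ⊆ {t} := fun u hu => hTss hu ht
        calc T.ncard ≤ ({t} : Set α).ncard :=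
              Set.ncard_le_ncard hsub (Set.finite_singleton t)
          _ = 1 := Set.ncard_singleton t
    have h3 : D.ncard ≤ (D \ T).ncard + T.ncard := by
      have hsub : D ⊆ (D \ T) ∪ T := by
        intro d hd
        by_cases h : d ∈ T
        · exact Or.inr h
        · exact Or.inl ⟨hd, h⟩
      calc D.ncard ≤ ((D \ T) ∪ T).ncard :=
            Set.ncard_le_ncard hsub (hDTfin.union hTfin)
        _ ≤ (D \ T).ncard + T.ncard := Set.ncard_union_le _ _
    omega

end Aux

theorem stmt0 {α : Type*} [Lattice α] (hd : IsDiscreteLattice α) (hs : IsSemimodular α)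
    (x y : α) (hxy : x ≤ y) :
    ∃ n : ℕ, ∀ C : Set α, MaxChainIn x y C → C.Finite ∧ (C \ {x}).ncard = n := by
  obtain ⟨C0, hC0, hC0fin⟩ := hd x y hxy
  refine ⟨(C0 \ {x}).ncard, fun C hC => ?_⟩
  obtain ⟨hCfin, hCcard⟩ :=
    key_bound hs _ x y hxy C0 hC0 hC0fin rfl C hC.1 hC.2.1
  refine ⟨hCfin, ?_⟩
  obtain ⟨_, hC0card⟩ :=
    key_bound hs _ x y hxy C hC hCfin rfl C0 hC0.1 hC0.2.1
  have hxC : x ∈ C := maxChain_left_mem hxy hC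
  have hxC0 : x ∈ C0 := maxChain_left_mem hxy hC0
  have e1 : (C \ {x}).ncard + 1 = C.ncard :=
    Set.ncard_diff_singleton_add_one hxC hCfin
  have e2 : (C0 \ {x}).ncard + 1 = C0.ncard :=
    Set.ncard_diff_singleton_add_one hxC0 hC0fin
  omega
end

section
/- In a discrete semimodular lattice, define x ∼ y iff there exists z covered by both x and y, and let ≡ be the reflexive-transitive closure of ∼. Then x ≡ y implies h(x ∧ y, x) = h(x ∧ y, y), i.e., x and y have the same height above their meet. -/
lemma maxChain_mem {α : Type*} [Lattice α] {x y : α} (hxy : x ≤ y) {C : Set α}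
    (hC : MaxChainIn x y C) : x ∈ C ∧ y ∈ C := by
  obtain ⟨hsub, hchain, hmax⟩ := hC
  have hD : C = insert x (insert y C) := by
    apply hmax
    · intro d hd
      rcases hd with rfl | rfl | hd
      · exact ⟨le_refl _, hxy⟩
      · exact ⟨hxy, le_refl _⟩
      · exact hsub hd
    · refine IsChain.insert ?_ ?_
      · refine hchain.insert ?_
        intro b hb _
        exact Or.inr (hsub hb).2
      · intro b hb _
        rcases hb with rfl | hb
        · exact Or.inl hxy
        · exact Or.inl (hsub hb).1
    · exact fun d hd => Set.subset_insert _ _ (Set.subset_insert _ _ hd)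
  constructor
  · rw [hD]; exact Set.mem_insert _ _
  · rw [hD]; exact Set.mem_insert_of_mem _ (Set.mem_insert _ _)

lemma h_of_cov {α : Type*} [Lattice α] (h : α → α → ℕ)
    (hh : ∀ x y : α, x ≤ y → ∀ C : Set α, MaxChainIn x y C → (C \ {x}).ncard = h x y)
    {z x : α} (hzx : z ⋖ x) : h z x = 1 := by
  have hm : MaxChainIn z x {z, x} := by
    refine ⟨?_, ?_, ?_⟩
    · intro d hd
      rcases hd with rfl | rfl
      · exact ⟨le_rfl, hzx.le⟩
      · exact ⟨hzx.le, le_rfl⟩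
    · exact IsChain.pair hzx.le
    · intro D hDsub hDchain hCD
      refine subset_antisymm hCD ?_
      intro d hd
      obtain ⟨h1, h2⟩ := hDsub hd
      rcases hzx.eq_or_eq h1 h2 with rfl | rfl
      · exact Or.inl rfl
      · exact Or.inr rfl
  have := hh z x hzx.le _ hm
  rw [← this]
  rw [Set.pair_diff_left hzx.ne, Set.ncard_singleton]


lemma h_add {α : Type*} [Lattice α] (hd : IsDiscreteLattice α) (h : α → α → ℕ)
    (hh : ∀ x y : α, x ≤ y → ∀ C : Set α, MaxChainIn x y C → (C \ {x}).ncard = h x y)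
    {a b c : α} (hab : a ≤ b) (hbc : b ≤ c) : h a c = h a b + h b c := by
  obtain ⟨C1, hC1, hC1f⟩ := hd a b hab
  obtain ⟨C2, hC2, hC2f⟩ := hd b c hbc
  have hbC1 : b ∈ C1 := (maxChain_mem hab hC1).2
  have hbC2 : b ∈ C2 := (maxChain_mem hbc hC2).1
  have hmax : MaxChainIn a c (C1 ∪ C2) := by
    refine ⟨?_, ?_, ?_⟩
    · intro d hd'
      rcases hd' with hd' | hd'
      · exact ⟨(hC1.1 hd').1, (hC1.1 hd').2.trans hbc⟩
      · exact ⟨hab.trans (hC2.1 hd').1, (hC2.1 hd').2⟩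
    · intro p hp q hq hne
      rcases hp with hp | hp <;> rcases hq with hq | hq
      · exact hC1.2.1 hp hq hne
      · exact Or.inl ((hC1.1 hp).2.trans (hC2.1 hq).1)
      · exact Or.inr ((hC1.1 hq).2.trans (hC2.1 hp).1)
      · exact hC2.2.1 hp hq hne
    · intro D hDsub hDchain hCD
      have hbD : b ∈ D := hCD (Or.inl hbC1)
      have hD1 : C1 = D ∩ Set.Icc a b := by
        apply hC1.2.2
        · exact Set.inter_subset_right
        · exact hDchain.mono Set.inter_subset_left
        · exact Set.subset_inter (fun p hp => hCD (Or.inl hp)) hC1.1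
      have hD2 : C2 = D ∩ Set.Icc b c := by
        apply hC2.2.2
        · exact Set.inter_subset_right
        · exact hDchain.mono Set.inter_subset_left
        · exact Set.subset_inter (fun p hp => hCD (Or.inr hp)) hC2.1
      refine subset_antisymm hCD ?_
      intro d hdD
      by_cases hdb : d = b
      · exact Or.inl (hdb ▸ hbC1)
      · rcases hDchain hdD hbD hdb with hle | hle
        · exact Or.inl (hD1 ▸ ⟨hdD, (hDsub hdD).1, hle⟩)
        · exact Or.inr (hD2 ▸ ⟨hdD, hle, (hDsub hdD).2⟩)
  have key := hh a c (hab.trans hbc) _ hmax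
  rw [← key, ← hh a b hab _ hC1, ← hh b c hbc _ hC2]
  have hset : (C1 ∪ C2) \ {a} = (C1 \ {a}) ∪ (C2 \ {b}) := by
    ext d
    simp only [Set.mem_diff, Set.mem_union, Set.mem_singleton_iff]
    constructor
    · rintro ⟨hd' | hd', hda⟩
      · exact Or.inl ⟨hd', hda⟩
      · by_cases hdb : d = b
        · exact Or.inl ⟨hdb ▸ hbC1, hda⟩
        · exact Or.inr ⟨hd', hdb⟩
    · rintro (⟨hd', hda⟩ | ⟨hd', hdb⟩)
      · exact ⟨Or.inl hd', hda⟩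
      · refine ⟨Or.inr hd', fun hda => hdb ?_⟩
        subst hda
        exact le_antisymm hab (hC2.1 hd').1
  rw [hset]
  have hdisj : Disjoint (C1 \ {a}) (C2 \ {b}) := by
    rw [Set.disjoint_left]
    rintro p ⟨hp1, _⟩ ⟨hp2, hpb⟩
    exact hpb (le_antisymm (hC1.1 hp1).2 (hC2.1 hp2).1)
  rw [Set.ncard_union_eq hdisj hC1f.diff hC2f.diff]


theorem stmt3 {α : Type*} [Lattice α] (hd : IsDiscreteLattice α) (hs : IsSemimodular α)
    (h : α → α → ℕ)
    (hh : ∀ x y : α, x ≤ y → ∀ C : Set α, MaxChainIn x y C → (C \ {x}).ncard = h x y)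
    (x y : α) (hxy : LevelEquiv x y) :
    h (x ⊓ y) x = h (x ⊓ y) y := by
  have key : ∃ a, a ≤ x ∧ a ≤ y ∧ h a x = h a y := by
    induction hxy with
    | refl => exact ⟨x, le_rfl, le_rfl, rfl⟩
    | tail hxy' hsim ih =>
      obtain ⟨a, hax, hay, heq⟩ := ih
      obtain ⟨z, hzy, hzw⟩ := hsim
      refine ⟨a ⊓ z, inf_le_left.trans hax, inf_le_right.trans hzw.le, ?_⟩
      have h1 : h (a ⊓ z) x = h (a ⊓ z) a + h a x := h_add hd h hh inf_le_left hax
      have h2 : h (a ⊓ z) _ = h (a ⊓ z) a + h a _ := h_add hd h hh inf_le_left hay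
      have h3 : h (a ⊓ z) _ = h (a ⊓ z) z + h z _ := h_add hd h hh inf_le_right hzy.le
      have h4 : h (a ⊓ z) _ = h (a ⊓ z) z + h z _ := h_add hd h hh inf_le_right hzw.le
      rw [h1, heq, ← h2, h3, h_of_cov h hh hzy, h4, h_of_cov h hh hzw]
  obtain ⟨a, hax, hay, heq⟩ := key
  have hm : a ≤ x ⊓ y := le_inf hax hay
  have e1 : h a x = h a (x ⊓ y) + h (x ⊓ y) x := h_add hd h hh hm inf_le_left
  have e2 : h a y = h a (x ⊓ y) + h (x ⊓ y) y := h_add hd h hh hm inf_le_right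
  omega
end

section
/- In a discrete semimodular lattice, for elements x and y and any common lower bound z of x and y, h(z,x) = h(z,y) if and only if x and y lie in the same level class (equivalence class of the reflexive-transitive closure of the relation 'there exists an element covered by both'). -/
namespace Stmt5Aux

variable {α : Type*} [Lattice α]

/-- A maximal chain of `[x,y]` contains both endpoints. -/
lemma endpoint_mem {x y : α} (hxy : x ≤ y) {C : Set α} (hC : MaxChainIn x y C) :
    x ∈ C ∧ y ∈ C := by
  obtain ⟨hsub, hch, hmax⟩ := hC
  have hch' : IsChain (· ≤ ·) (C ∪ {x, y}) := by
    intro a ha b hb hab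
    simp only [Set.mem_union, Set.mem_insert_iff, Set.mem_singleton_iff] at ha hb
    rcases ha with ha | ha | ha <;> rcases hb with hb | hb | hb
    · exact hch ha hb hab
    · subst hb; exact Or.inr (hsub ha).1
    · subst hb; exact Or.inl (hsub ha).2
    · subst ha; exact Or.inl (hsub hb).1
    · subst ha; subst hb; exact absurd rfl hab
    · subst ha; subst hb; exact Or.inl hxy
    · subst ha; exact Or.inr (hsub hb).2
    · subst ha; subst hb; exact Or.inr hxy
    · subst ha; subst hb; exact absurd rfl hab
  have hsub' : C ∪ {x, y} ⊆ Set.Icc x y := by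
    intro a ha
    rcases ha with ha | ha
    · exact hsub ha
    · simp only [Set.mem_insert_iff, Set.mem_singleton_iff] at ha
      rcases ha with rfl | rfl
      · exact ⟨le_rfl, hxy⟩
      · exact ⟨hxy, le_rfl⟩
  have heq := hmax (C ∪ {x, y}) hsub' hch' Set.subset_union_left
  constructor
  · rw [heq]; exact Or.inr (Or.inl rfl)
  · rw [heq]; exact Or.inr (Or.inr rfl)

lemma maxchain_singleton (z : α) : MaxChainIn z z {z} := by
  refine ⟨by simp, Set.subsingleton_singleton.isChain, ?_⟩
  intro D hD _ hzD
  apply Set.Subset.antisymm hzD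
  intro d hd
  have hd' := hD hd
  simp only [Set.Icc_self, Set.mem_singleton_iff] at hd' ⊢
  exact hd'

lemma maxchain_pair {w x : α} (hwx : w ⋖ x) : MaxChainIn w x {w, x} := by
  refine ⟨?_, ?_, ?_⟩
  · intro a ha
    simp only [Set.mem_insert_iff, Set.mem_singleton_iff] at ha
    rcases ha with rfl | rfl
    · exact ⟨le_rfl, hwx.le⟩
    · exact ⟨hwx.le, le_rfl⟩
  · intro a ha b hb hab
    simp only [Set.mem_insert_iff, Set.mem_singleton_iff] at ha hb
    rcases ha with rfl | rfl <;> rcases hb with rfl | rfl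
    · exact absurd rfl hab
    · exact Or.inl hwx.le
    · exact Or.inr hwx.le
    · exact absurd rfl hab
  · intro D hD _ hsub
    apply Set.Subset.antisymm hsub
    intro d hd
    obtain ⟨h1, h2⟩ := hD hd
    rcases hwx.eq_or_eq h1 h2 with rfl | rfl
    · exact Or.inl rfl
    · exact Or.inr rfl

section WithH

variable (h : α → α → ℕ)
variable (hh : ∀ x y : α, x ≤ y → ∀ C : Set α, MaxChainIn x y C → (C \ {x}).ncard = h x y)

include hh

lemma h_self (z : α) : h z z = 0 := by
  have := hh z z le_rfl {z} (maxchain_singleton z)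
  simpa using this.symm

lemma h_cov {w x : α} (hwx : w ⋖ x) : h w x = 1 := by
  have := hh w x hwx.le {w, x} (maxchain_pair hwx)
  rw [← this]
  rw [Set.pair_diff_left hwx.ne]
  simp

variable (hd : IsDiscreteLattice α)
include hd

lemma h_eq_zero {z x : α} (hzx : z ≤ x) (h0 : h z x = 0) : x = z := by
  obtain ⟨C, hC, hCf⟩ := hd z x hzx
  have hval := hh z x hzx C hC
  rw [h0] at hval
  have hemp : C \ {z} = ∅ := (Set.ncard_eq_zero (hCf.diff)).mp hval
  have hx := (endpoint_mem hzx hC).2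
  by_contra hne
  have : x ∈ C \ ({z} : Set α) := ⟨hx, hne⟩
  rw [hemp] at this
  exact this

lemma h_add {a b c : α} (hab : a ≤ b) (hbc : b ≤ c) : h a c = h a b + h b c := by
  obtain ⟨C1, hC1, hC1f⟩ := hd a b hab
  obtain ⟨C2, hC2, hC2f⟩ := hd b c hbc
  have ha1 := (endpoint_mem hab hC1).1
  have hb1 := (endpoint_mem hab hC1).2
  have hb2 := (endpoint_mem hbc hC2).1
  have hc2 := (endpoint_mem hbc hC2).2
  have hchain : IsChain (· ≤ ·) (C1 ∪ C2) := by
    intro p hp q hq hpq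
    rcases hp with hp | hp <;> rcases hq with hq | hq
    · exact hC1.2.1 hp hq hpq
    · exact Or.inl ((hC1.1 hp).2.trans (hC2.1 hq).1)
    · exact Or.inr ((hC1.1 hq).2.trans (hC2.1 hp).1)
    · exact hC2.2.1 hp hq hpq
  have hsub : C1 ∪ C2 ⊆ Set.Icc a c := by
    intro p hp
    rcases hp with hp | hp
    · exact ⟨(hC1.1 hp).1, (hC1.1 hp).2.trans hbc⟩
    · exact ⟨hab.trans (hC2.1 hp).1, (hC2.1 hp).2⟩
  have hmax : MaxChainIn a c (C1 ∪ C2) := by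
    refine ⟨hsub, hchain, ?_⟩
    intro D hD hDch hsubD
    have hbD : b ∈ D := hsubD (Or.inl hb1)
    have hD1 : C1 = D ∩ Set.Icc a b := by
      apply hC1.2.2
      · exact Set.inter_subset_right
      · exact hDch.mono Set.inter_subset_left
      · exact Set.subset_inter (fun p hp => hsubD (Or.inl hp)) hC1.1
    have hD2 : C2 = D ∩ Set.Icc b c := by
      apply hC2.2.2
      · exact Set.inter_subset_right
      · exact hDch.mono Set.inter_subset_left
      · exact Set.subset_inter (fun p hp => hsubD (Or.inr hp)) hC2.1
    apply Set.Subset.antisymm hsubD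
    intro d hd
    have hcomp : d ≤ b ∨ b ≤ d := by
      rcases eq_or_ne d b with rfl | hne
      · exact Or.inl le_rfl
      · exact hDch hd hbD hne
    rcases hcomp with hdb | hbd
    · exact Or.inl (hD1 ▸ (⟨hd, (hD hd).1, hdb⟩ : d ∈ D ∩ Set.Icc a b))
    · exact Or.inr (hD2 ▸ (⟨hd, hbd, (hD hd).2⟩ : d ∈ D ∩ Set.Icc b c))
  have hval := hh a c (hab.trans hbc) (C1 ∪ C2) hmax
  have hval1 := hh a b hab C1 hC1
  have hval2 := hh b c hbc C2 hC2
  have hset : (C1 ∪ C2) \ {a} = (C1 \ {a}) ∪ (C2 \ {b}) := by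
    ext p
    simp only [Set.mem_diff, Set.mem_union, Set.mem_singleton_iff]
    constructor
    · rintro ⟨hp | hp, hpa⟩
      · exact Or.inl ⟨hp, hpa⟩
      · rcases eq_or_ne p b with rfl | hpb
        · exact Or.inl ⟨hb1, hpa⟩
        · exact Or.inr ⟨hp, hpb⟩
    · rintro (⟨hp, hpa⟩ | ⟨hp, hpb⟩)
      · exact ⟨Or.inl hp, hpa⟩
      · refine ⟨Or.inr hp, ?_⟩
        rintro rfl
        exact hpb (le_antisymm hab (hC2.1 hp).1)
  have hdisj : Disjoint (C1 \ {a}) (C2 \ {b}) := by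
    rw [Set.disjoint_left]
    rintro p ⟨hp1, _⟩ ⟨hp2, hpb⟩
    exact hpb (le_antisymm (hC1.1 hp1).2 (hC2.1 hp2).1)
  rw [← hval, ← hval1, ← hval2, hset,
    Set.ncard_union_eq hdisj (hC1f.diff) (hC2f.diff)]

lemma exists_pred {z x : α} (hzx : z ≤ x) (hne : x ≠ z) :
    ∃ x', z ≤ x' ∧ x' ⋖ x ∧ h z x = h z x' + 1 := by
  obtain ⟨C, hC, hCf⟩ := hd z x hzx
  have hzC := (endpoint_mem hzx hC).1
  have hxC := (endpoint_mem hzx hC).2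
  set S := C \ ({x} : Set α) with hS
  have hSf : S.Finite := hCf.diff
  have hSne : S.Nonempty := ⟨z, hzC, fun hz => hne (by simpa using hz.symm)⟩
  obtain ⟨x', hx'S, hx'max⟩ := Set.Finite.exists_maximalFor id S hSf hSne
  have hgreatest : ∀ p ∈ S, p ≤ x' := by
    intro p hp
    rcases eq_or_ne p x' with rfl | hpne
    · exact le_rfl
    · rcases hC.2.1 hp.1 hx'S.1 hpne with h1 | h1
      · exact h1
      · exact (hx'max hp h1)
  have hx'x : x' ≤ x := (hC.1 hx'S.1).2
  have hx'nex : x' ≠ x := hx'S.2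
  have hzx' : z ≤ x' := hgreatest z ⟨hzC, fun hz => hne (by simpa using hz.symm)⟩
  have hcov : x' ⋖ x := by
    refine ⟨lt_of_le_of_ne hx'x hx'nex, ?_⟩
    intro t ht1 ht2
    have htC : t ∈ C := by
      have hch : IsChain (· ≤ ·) (C ∪ {t}) := by
        intro p hp q hq hpq
        rcases hp with hp | hp <;> rcases hq with hq | hq
        · exact hC.2.1 hp hq hpq
        · simp only [Set.mem_singleton_iff] at hq; subst hq
          rcases eq_or_ne p x with rfl | hpx
          · exact Or.inr ht2.le
          · exact Or.inl ((hgreatest p ⟨hp, hpx⟩).trans ht1.le)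
        · simp only [Set.mem_singleton_iff] at hp; subst hp
          rcases eq_or_ne q x with rfl | hqx
          · exact Or.inl ht2.le
          · exact Or.inr ((hgreatest q ⟨hq, hqx⟩).trans ht1.le)
        · simp only [Set.mem_singleton_iff] at hp hq; subst hp; subst hq
          exact absurd rfl hpq
      have hsub : C ∪ {t} ⊆ Set.Icc z x := by
        intro p hp
        rcases hp with hp | hp
        · exact hC.1 hp
        · simp only [Set.mem_singleton_iff] at hp; subst hp
          exact ⟨hzx'.trans ht1.le, ht2.le⟩
      have := hC.2.2 (C ∪ {t}) hsub hch Set.subset_union_left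
      rw [this]; exact Or.inr rfl
    have htS : t ∈ S := ⟨htC, fun ht => absurd (ht ▸ ht2) (lt_irrefl x)⟩
    exact absurd (lt_of_le_of_lt (hgreatest t htS) ht1) (lt_irrefl t)
  have hSmax : MaxChainIn z x' S := by
    refine ⟨?_, hC.2.1.mono Set.diff_subset, ?_⟩
    · intro p hp
      exact ⟨(hC.1 hp.1).1, hgreatest p hp⟩
    · intro D hD hDch hsubD
      have hxD : x ∉ D := fun hx => absurd ((hD hx).2) (not_le_of_gt hcov.lt)
      have hch : IsChain (· ≤ ·) (D ∪ {x}) := by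
        intro p hp q hq hpq
        rcases hp with hp | hp <;> rcases hq with hq | hq
        · exact hDch hp hq hpq
        · simp only [Set.mem_singleton_iff] at hq; subst hq
          exact Or.inl ((hD hp).2.trans hx'x)
        · simp only [Set.mem_singleton_iff] at hp; subst hp
          exact Or.inr ((hD hq).2.trans hx'x)
        · simp only [Set.mem_singleton_iff] at hp hq; subst hp; subst hq
          exact absurd rfl hpq
      have hsub : D ∪ {x} ⊆ Set.Icc z x := by
        intro p hp
        rcases hp with hp | hp
        · exact ⟨(hD hp).1, (hD hp).2.trans hx'x⟩
        · simp only [Set.mem_singleton_iff] at hp; subst hp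
          exact ⟨hzx, le_rfl⟩
      have hCsub : C ⊆ D ∪ {x} := by
        intro p hp
        rcases eq_or_ne p x with rfl | hpx
        · exact Or.inr rfl
        · exact Or.inl (hsubD ⟨hp, hpx⟩)
      have heq := hC.2.2 (D ∪ {x}) hsub hch hCsub
      apply Set.Subset.antisymm hsubD
      intro d hd
      have : d ∈ C := by rw [heq]; exact Or.inl hd
      exact ⟨this, fun hdx => hxD (hdx ▸ hd)⟩
  have hval := hh z x hzx C hC
  have hval' := hh z x' hzx' S hSmax
  have hxmem : x ∈ C \ ({z} : Set α) := ⟨hxC, fun hx => hne (by simpa using hx)⟩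
  have hset : C \ ({z} : Set α) = insert x (S \ {z}) := by
    ext p
    simp only [Set.mem_diff, Set.mem_insert_iff, Set.mem_singleton_iff, hS]
    constructor
    · rintro ⟨hp, hpz⟩
      rcases eq_or_ne p x with rfl | hpx
      · exact Or.inl rfl
      · exact Or.inr ⟨⟨hp, hpx⟩, hpz⟩
    · rintro (rfl | ⟨⟨hp, _⟩, hpz⟩)
      · exact ⟨hxC, fun hx => hne (by simpa using hx)⟩
      · exact ⟨hp, hpz⟩
  refine ⟨x', hzx', hcov, ?_⟩
  rw [← hval, ← hval', hset, Set.ncard_insert_of_notMem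
    (fun hx => hx.1.2 rfl) (hSf.diff)]


lemma fwd {x y : α} (hlev : LevelEquiv x y) :
    ∀ z : α, z ≤ x → z ≤ y → h z x = h z y := by
  induction hlev with
  | refl => intro z _ _; rfl
  | @tail b c _ hbc ih =>
      intro z hzx hzc
      obtain ⟨w, hwb, hwc⟩ := hbc
      have huz : z ⊓ w ≤ z := inf_le_left
      have huw : z ⊓ w ≤ w := inf_le_right
      have h1 : h (z ⊓ w) x = h (z ⊓ w) b := ih (z ⊓ w) (huz.trans hzx) (huw.trans hwb.le)
      have h2 : h (z ⊓ w) b = h (z ⊓ w) w + 1 := by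
        rw [h_add h hh hd huw hwb.le, h_cov h hh hwb]
      have h3 : h (z ⊓ w) c = h (z ⊓ w) w + 1 := by
        rw [h_add h hh hd huw hwc.le, h_cov h hh hwc]
      have h4 : h (z ⊓ w) x = h (z ⊓ w) z + h z x := h_add h hh hd huz hzx
      have h5 : h (z ⊓ w) c = h (z ⊓ w) z + h z c := h_add h hh hd huz hzc
      omega

end WithH

lemma cov_sup (hs : IsSemimodular α) {w u v : α} (hwu : w ⋖ u) (hwv : w ⋖ v) (hne : u ≠ v) :
    u ⋖ u ⊔ v ∧ v ⋖ u ⊔ v := by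
  have hinf : u ⊓ v = w := by
    rcases hwu.eq_or_eq (le_inf hwu.le hwv.le) inf_le_left with h1 | h1
    · exact h1
    · exfalso
      have huv : u ≤ v := h1 ▸ inf_le_right
      rcases hwv.eq_or_eq hwu.le huv with h2 | h2
      · exact hwu.lt.ne' h2
      · exact hne h2
  constructor
  · have := hs v u (by rw [inf_comm]; rw [hinf]; exact hwv)
    rwa [sup_comm] at this
  · exact hs u v (hinf ▸ hwu)

lemma lift_one (hs : IsSemimodular α) {v u' t : α} (hvt : v ⋖ t) (hsim : Sim v u') :
    ∃ t', u' ⋖ t' ∧ LevelEquiv t t' := by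
  obtain ⟨w, hwv, hwu'⟩ := hsim
  rcases eq_or_ne v u' with rfl | hne
  · exact ⟨t, hvt, Relation.ReflTransGen.refl⟩
  · obtain ⟨h1, h2⟩ := cov_sup hs hwv hwu' hne
    exact ⟨v ⊔ u', h2, Relation.ReflTransGen.single ⟨v, hvt, h1⟩⟩

lemma path_lift (hs : IsSemimodular α) {u u' t : α} (hut : u ⋖ t) (hlev : LevelEquiv u u') :
    ∃ t', u' ⋖ t' ∧ LevelEquiv t t' := by
  induction hlev with
  | refl => exact ⟨t, hut, Relation.ReflTransGen.refl⟩
  | tail _ hbc ih =>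
      obtain ⟨s, hs1, hs2⟩ := ih
      obtain ⟨t', h1, h2⟩ := lift_one hs hs1 hbc
      exact ⟨t', h1, hs2.trans h2⟩

end Stmt5Aux

open Stmt5Aux in
theorem stmt5 {α : Type*} [Lattice α] (hd : IsDiscreteLattice α) (hs : IsSemimodular α)
    (h : α → α → ℕ)
    (hh : ∀ x y : α, x ≤ y → ∀ C : Set α, MaxChainIn x y C → (C \ {x}).ncard = h x y)
    (x y z : α) (hzx : z ≤ x) (hzy : z ≤ y) :
    h z x = h z y ↔ LevelEquiv x y := by
  constructor
  · -- equal heights → same level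
    have key : ∀ n : ℕ, ∀ x y z : α, z ≤ x → z ≤ y → h z x = n → h z y = n →
        LevelEquiv x y := by
      intro n
      induction n with
      | zero =>
          intro x y z hzx hzy hx hy
          rw [h_eq_zero h hh hd hzx hx, h_eq_zero h hh hd hzy hy]
          exact Relation.ReflTransGen.refl
      | succ n ih =>
          intro x y z hzx hzy hx hy
          have hxz : x ≠ z := by
            rintro rfl
            rw [h_self h hh] at hx
            omega
          have hyz : y ≠ z := by
            rintro rfl
            rw [h_self h hh] at hy
            omega
          obtain ⟨x', hzx', hx'x, hxeq⟩ := exists_pred h hh hd hzx hxz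
          obtain ⟨y', hzy', hy'y, hyeq⟩ := exists_pred h hh hd hzy hyz
          have hlev' : LevelEquiv x' y' := ih x' y' z hzx' hzy' (by omega) (by omega)
          obtain ⟨x'', hy'x'', hlx⟩ := path_lift hs hx'x hlev'
          exact hlx.trans (Relation.ReflTransGen.single ⟨y', hy'x'', hy'y⟩)
    intro heq
    exact key (h z y) x y z hzx hzy heq rfl
  · -- same level → equal heights
    intro hlev
    exact fwd h hh hd hlev z hzx hzy
end

section
/- In a discrete semimodular lattice, every level class (equivalence class of the reflexive-transitive closure of the relation 'some element is covered by both') is an antichain. -/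
section Aux

variable {α : Type*} [Lattice α]

private lemma covSeries_head_eq_last (p : RelSeries {(a, b) : α × α | a ⋖ b})
    (h : p.length = 0) : p.head = p.last := by
  show p 0 = p (Fin.last _)
  congr 1
  ext
  simp [h]

private lemma covSeries_head_le_last (p : RelSeries {(a, b) : α × α | a ⋖ b}) : p.head ≤ p.last := by
  have := RelSeries.rel_or_eq_of_le (p.ofLE (s := {(a, b) : α × α | a < b}) (fun ⟨a, b⟩ h => CovBy.lt h))
    (i := 0) (j := Fin.last _) (Fin.zero_le _)
  rcases this with h | h
  · exact le_of_lt h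
  · exact le_of_eq h

private lemma covSeries_head_lt_last (p : RelSeries {(a, b) : α × α | a ⋖ b})
    (hp : p.length ≠ 0) : p.head < p.last := by
  have := RelSeries.rel_of_lt (p.ofLE (s := {(a, b) : α × α | a < b}) (fun ⟨a, b⟩ h => CovBy.lt h))
    (i := 0) (j := Fin.last _) (by
      simp only [Fin.lt_def, Fin.val_last]
      exact Nat.pos_of_ne_zero hp)
  exact this

/-- From a finite maximal chain we can extract a covering series. -/
private lemma exists_covSeries (hd : IsDiscreteLattice α) {u v : α} (huv : u ≤ v) :
    ∃ p : RelSeries {(a, b) : α × α | a ⋖ b}, p.head = u ∧ p.last = v := by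
  obtain ⟨C, ⟨hsub, hchain, hmax⟩, hfin⟩ := hd u v huv
  -- `u ∈ C` and `v ∈ C`
  have huC : u ∈ C := by
    have h : C = insert u C := by
      refine hmax _ ?_ (hchain.insert ?_) (Set.subset_insert _ _)
      · exact Set.insert_subset ⟨le_refl u, huv⟩ hsub
      · intro b hb _; exact Or.inl (hsub hb).1
    rw [h]; exact Set.mem_insert _ _
  have hvC : v ∈ C := by
    have h : C = insert v C := by
      refine hmax _ ?_ (hchain.insert ?_) (Set.subset_insert _ _)
      · exact Set.insert_subset ⟨huv, le_refl v⟩ hsub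
      · intro b hb _; exact Or.inr (hsub hb).2
    rw [h]; exact Set.mem_insert _ _
  letI : Fintype C := hfin.fintype
  letI : LinearOrder C :=
    { (inferInstance : PartialOrder C) with
      le_total := fun a b => hchain.total a.2 b.2
      toDecidableLE := Classical.decRel _ }
  obtain ⟨m, hm⟩ : ∃ m, Fintype.card C = m + 1 := by
    have : 0 < Fintype.card C := Fintype.card_pos_iff.mpr ⟨⟨u, huC⟩⟩
    exact ⟨Fintype.card C - 1, (Nat.succ_pred_eq_of_pos this).symm⟩
  let e := monoEquivOfFin C hm
  refine ⟨⟨m, fun i => (e i : α), ?_⟩, ?_, ?_⟩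
  · -- covering steps
    intro i
    dsimp only
    have hlt : (e i.castSucc : α) < (e i.succ : α) := by
      exact_mod_cast e.strictMono (Fin.castSucc_lt_succ (i := i))
    refine ⟨hlt, ?_⟩
    intro c hc1 hc2
    -- c can be inserted in C, contradicting maximality
    have hcC : c ∈ C := by
      have hcIcc : c ∈ Set.Icc u v := by
        constructor
        · exact le_trans (hsub (e i.castSucc).2).1 hc1.le
        · exact le_trans hc2.le (hsub (e i.succ).2).2
      have h : C = insert c C := by
        refine hmax _ (Set.insert_subset hcIcc hsub) (hchain.insert ?_) (Set.subset_insert _ _)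
        intro b hb _
        set j := e.symm ⟨b, hb⟩ with hj
        have hbe : (e j : α) = b := by rw [hj]; simp
        rcases le_or_gt j i.castSucc with h' | h'
        · right
          calc b = (e j : α) := hbe.symm
            _ ≤ (e i.castSucc : α) := by exact_mod_cast e.monotone h'
            _ ≤ c := hc1.le
        · left
          have h'' : i.succ ≤ j := h'
          calc c ≤ (e i.succ : α) := hc2.le
            _ ≤ (e j : α) := by exact_mod_cast e.monotone h''
            _ = b := hbe
      rw [h]; exact Set.mem_insert _ _
    set j := e.symm ⟨c, hcC⟩ with hj
    have hbe : (e j : α) = c := by rw [hj]; simp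
    rcases le_or_gt j i.castSucc with h' | h'
    · have : c ≤ (e i.castSucc : α) := by
        calc c = (e j : α) := hbe.symm
          _ ≤ (e i.castSucc : α) := by exact_mod_cast e.monotone h'
      exact absurd hc1 (not_lt_of_ge this)
    · have h'' : i.succ ≤ j := h'
      have : (e i.succ : α) ≤ c := by
        calc (e i.succ : α) ≤ (e j : α) := by exact_mod_cast e.monotone h''
          _ = c := hbe
      exact absurd hc2 (not_lt_of_ge this)
  · -- head = u
    show (e 0 : α) = u
    refine le_antisymm ?_ (hsub (e 0).2).1
    have : e 0 ≤ e (e.symm ⟨u, huC⟩) := e.monotone (Fin.zero_le _)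
    simpa using Subtype.coe_le_coe.mpr this
  · -- last = v
    show (e (Fin.last m) : α) = v
    refine le_antisymm (hsub (e (Fin.last m)).2).2 ?_
    have : e (e.symm ⟨v, hvC⟩) ≤ e (Fin.last m) := e.monotone (Fin.le_last _)
    simpa using Subtype.coe_le_coe.mpr this

/-- Jordan–Dedekind: two covering series with the same endpoints have the same length. -/
private lemma jd (hd : IsDiscreteLattice α) (hs : IsSemimodular α) :
    ∀ n : ℕ, ∀ p q : RelSeries {(a, b) : α × α | a ⋖ b}, p.length ≤ n →
      p.head = q.head → p.last = q.last → p.length = q.length := by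
  intro n
  induction n with
  | zero =>
    intro p q hp hh hl
    have hp0 : p.length = 0 := Nat.le_zero.mp hp
    by_contra hne
    have hq0 : q.length ≠ 0 := fun h => hne (by rw [hp0, h])
    have h1 : q.head < q.last := covSeries_head_lt_last q hq0
    have h2 : p.head = p.last := by
      show p 0 = p (Fin.last _)
      congr 1
      ext; simp [hp0]
    rw [hh, hl] at h2
    exact absurd h2 (ne_of_lt h1)
  | succ n ih =>
    intro p q hp hh hl
    by_cases hp0 : p.length = 0
    · by_contra hne
      have hq0 : q.length ≠ 0 := fun h => hne (by rw [hp0, h])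
      have h1 : q.head < q.last := covSeries_head_lt_last q hq0
      have h2 : p.head = p.last := by
        show p 0 = p (Fin.last _)
        congr 1
        ext; simp [hp0]
      rw [hh, hl] at h2
      exact absurd h2 (ne_of_lt h1)
    by_cases hq0 : q.length = 0
    · have h1 : p.head < p.last := covSeries_head_lt_last p hp0
      have h2 : q.head = q.last := by
        show q 0 = q (Fin.last _)
        congr 1
        ext; simp [hq0]
      rw [← hh, ← hl] at h2
      exact absurd h2 (ne_of_lt h1)
    -- both nontrivial
    set p' := p.tail hp0 with hp'
    set q' := q.tail hq0 with hq'
    have hpstep : p.head ⋖ p'.head := by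
      rw [RelSeries.head_tail]
      have h := p.step ⟨0, Nat.pos_of_ne_zero hp0⟩
      have e0 : (0 : Fin (p.length + 1)) = Fin.castSucc ⟨0, Nat.pos_of_ne_zero hp0⟩ := by
        ext; simp
      have e1 : (1 : Fin (p.length + 1)) = Fin.succ ⟨0, Nat.pos_of_ne_zero hp0⟩ := by
        ext
        show 1 % (p.length + 1) = 0 + 1
        rw [Nat.mod_eq_of_lt (by omega)]
      rw [RelSeries.head, e0, e1]
      exact h
    have hqstep : q.head ⋖ q'.head := by
      rw [RelSeries.head_tail]
      have h := q.step ⟨0, Nat.pos_of_ne_zero hq0⟩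
      have e0 : (0 : Fin (q.length + 1)) = Fin.castSucc ⟨0, Nat.pos_of_ne_zero hq0⟩ := by
        ext; simp
      have e1 : (1 : Fin (q.length + 1)) = Fin.succ ⟨0, Nat.pos_of_ne_zero hq0⟩ := by
        ext
        show 1 % (q.length + 1) = 0 + 1
        rw [Nat.mod_eq_of_lt (by omega)]
      rw [RelSeries.head, e0, e1]
      exact h
    have hp'len : p'.length = p.length - 1 := rfl
    have hq'len : q'.length = q.length - 1 := rfl
    have hp'last : p'.last = p.last := RelSeries.last_tail _ _
    have hq'last : q'.last = q.last := RelSeries.last_tail _ _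
    have hple : p'.length ≤ n := by
      rw [hp'len]; omega
    by_cases hcd : p'.head = q'.head
    · have := ih p' q' hple (by rw [hcd]) (by rw [hp'last, hq'last, hl])
      rw [hp'len, hq'len] at this
      omega
    · -- distinct atoms over the common head
      set c := p'.head with hc
      set d := q'.head with hd'
      have hhead : p.head ⋖ d := by rw [hh]; exact hqstep
      have hinf : c ⊓ d = p.head := by
        refine le_antisymm ?_ (le_inf hpstep.lt.le hhead.lt.le)
        by_contra hlt
        have h1 : p.head < c ⊓ d := lt_of_le_of_ne (le_inf hpstep.lt.le hhead.lt.le)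
          (fun h => hlt (h ▸ le_refl _))
        have h2 : c ⊓ d ≤ c := inf_le_left
        have h3 : c ⊓ d = c := by
          rcases lt_or_eq_of_le h2 with h | h
          · exact absurd h (hpstep.2 h1)
          · exact h
        have h4 : c ≤ d := h3 ▸ inf_le_right
        have h5 : c = d := by
          rcases lt_or_eq_of_le h4 with h | h
          · exact absurd h (hhead.2 hpstep.lt)
          · exact h
        exact hcd h5
      have hcsup : c ⋖ c ⊔ d := by
        have : (d ⊓ c) ⋖ d := by rw [inf_comm, hinf]; exact hhead
        have := hs d c this
        rwa [sup_comm] at this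
      have hdsup : d ⋖ c ⊔ d := by
        have : (c ⊓ d) ⋖ c := by rw [hinf]; exact hpstep
        exact hs c d this
      have hsupv : c ⊔ d ≤ p.last := by
        refine sup_le ?_ ?_
        · rw [← hp'last]; exact covSeries_head_le_last p'
        · rw [hl, ← hq'last]; exact covSeries_head_le_last q'
      obtain ⟨E, hEh, hEl⟩ := exists_covSeries hd hsupv
      have hE1 : (E.cons c (hEh ▸ hcsup)).length = E.length + 1 := by
        simp [RelSeries.cons_length]
      have hE2 : (E.cons d (hEh ▸ hdsup)).length = E.length + 1 := by
        simp [RelSeries.cons_length]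
      have e1 : p'.length = E.length + 1 := by
        have := ih p' (E.cons c (hEh ▸ hcsup)) hple (by simp [hc]) (by simp [hEl, hp'last])
        rw [hE1] at this; exact this
      have e2 : (E.cons d (hEh ▸ hdsup)).length = q'.length := by
        refine ih _ q' (by rw [hE2, ← e1]; exact hple) (by simp [hd']) ?_
        simp [hEl, hq'last, hl]
      rw [hE2, ← e1] at e2
      rw [hp'len, hq'len] at e2
      omega

variable (hd : IsDiscreteLattice α)

/-- Height of the interval `[u,v]`: the common length of covering series from `u` to `v`. -/
private noncomputable def hgt (u v : α) : ℕ :=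
  @dite _ (u ≤ v) (Classical.dec _) (fun h => (exists_covSeries hd h).choose.length) (fun _ => 0)

variable (hs : IsSemimodular α)

include hd hs

private lemma hgt_eq {u v : α} (h : u ≤ v) (p : RelSeries {(a, b) : α × α | a ⋖ b})
    (hh : p.head = u) (hl : p.last = v) : hgt hd u v = p.length := by
  rw [hgt, dif_pos h]
  obtain ⟨h1, h2⟩ := (exists_covSeries hd h).choose_spec
  exact jd hd hs _ _ _ le_rfl (by rw [h1, hh]) (by rw [h2, hl])

private lemma hgt_self (u : α) : hgt hd u u = 0 :=
  hgt_eq hd hs le_rfl (RelSeries.singleton _ u) rfl rfl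

omit hs in
private lemma hgt_pos {u v : α} (h : u < v) : 0 < hgt hd u v := by
  rw [hgt, dif_pos h.le]
  obtain ⟨h1, h2⟩ := (exists_covSeries hd h.le).choose_spec
  by_contra h0
  have h0' : (exists_covSeries hd h.le).choose.length = 0 := by omega
  have heq := covSeries_head_eq_last _ h0'
  rw [h1, h2] at heq
  exact absurd heq (ne_of_lt h)

private lemma hgt_add {u v w : α} (h1 : u ≤ v) (h2 : v ≤ w) :
    hgt hd u w = hgt hd u v + hgt hd v w := by
  obtain ⟨p, hph, hpl⟩ := exists_covSeries hd h1
  obtain ⟨q, hqh, hql⟩ := exists_covSeries hd h2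
  have hc : p.last = q.head := by rw [hpl, hqh]
  have := hgt_eq hd hs (le_trans h1 h2) (p.smash q hc)
    (by rw [RelSeries.head_smash, hph]) (by rw [RelSeries.last_smash, hql])
  rw [this, RelSeries.smash_length, hgt_eq hd hs h1 p hph hpl, hgt_eq hd hs h2 q hqh hql]

private lemma hgt_covBy {t y : α} (h : t ⋖ y) : hgt hd t y = 1 :=
  hgt_eq hd hs h.le ((RelSeries.singleton _ t).snoc y (by simpa using h)) (by simp) (by simp)

private lemma sim_hgt {y z : α} (h : Sim y z) {v : α} (hvy : v ≤ y) (hvz : v ≤ z) :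
    hgt hd v y = hgt hd v z := by
  obtain ⟨t, hty, htz⟩ := h
  by_cases hyz : y = z
  · rw [hyz]
  have hinf : y ⊓ z = t := by
    refine le_antisymm ?_ (le_inf hty.lt.le htz.lt.le)
    by_contra hlt
    have h1 : t < y ⊓ z := lt_of_le_of_ne (le_inf hty.lt.le htz.lt.le)
      (fun h => hlt (h ▸ le_refl _))
    have h3 : y ⊓ z = y := by
      rcases lt_or_eq_of_le (inf_le_left : y ⊓ z ≤ y) with h | h
      · exact absurd h (hty.2 h1)
      · exact h
    have h4 : y ≤ z := h3 ▸ inf_le_right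
    have h5 : y = z := by
      rcases lt_or_eq_of_le h4 with h | h
      · exact absurd h (htz.2 hty.lt)
      · exact h
    exact hyz h5
  have hvt : v ≤ t := hinf ▸ le_inf hvy hvz
  rw [hgt_add hd hs hvt hty.le, hgt_add hd hs hvt htz.le,
    hgt_covBy hd hs hty, hgt_covBy hd hs htz]

private lemma levelEquiv_hgt {x y : α} (h : LevelEquiv x y) :
    ∀ w : α, w ≤ x → w ≤ y → hgt hd w x = hgt hd w y := by
  induction h with
  | refl => intro w _ _; rfl
  | @tail b c hab hbc ih =>
    intro w hwx hwc
    set v := w ⊓ b with hv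
    have hvb : v ≤ b := inf_le_right
    have hvw : v ≤ w := inf_le_left
    have h1 : hgt hd v x = hgt hd v b := ih v (le_trans hvw hwx) hvb
    have h2 : hgt hd v b = hgt hd v c := sim_hgt hd hs hbc hvb (le_trans hvw hwc)
    have h3 : hgt hd v x = hgt hd v w + hgt hd w x := hgt_add hd hs hvw hwx
    have h4 : hgt hd v c = hgt hd v w + hgt hd w c := hgt_add hd hs hvw hwc
    omega

end Aux

theorem stmt6 {α : Type*} [Lattice α] (hd : IsDiscreteLattice α) (hs : IsSemimodular α)
    (a : α) :
    IsAntichain (· ≤ ·) {x : α | LevelEquiv a x} := by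
  intro x hx y hy hne hle
  have hsym : Symmetric (Sim (α := α)) := by
    rintro p q ⟨z, h1, h2⟩; exact ⟨z, h2, h1⟩
  have hxy : LevelEquiv x y :=
    Relation.ReflTransGen.trans (by haveI : Std.Symm (Sim (α := α)) := ⟨hsym⟩; exact (_root_.symm (show Relation.ReflTransGen Sim a x from hx) : Relation.ReflTransGen Sim x a)) hy
  have hlt : x < y := lt_of_le_of_ne hle hne
  have := levelEquiv_hgt hd hs hxy x le_rfl hle
  rw [hgt_self hd hs] at this
  have := hgt_pos hd hlt
  omega
end

section
/- In a discrete semimodular lattice L, a subset A ⊆ L is an antichain cutset if and only if A is a level class. -/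
namespace Stmt9
variable {α : Type*} [Lattice α]

/-- covering chains of length `n` -/
def CovN : ℕ → α → α → Prop
  | 0, x, y => x = y
  | n+1, x, y => ∃ z, x ⋖ z ∧ CovN n z y

theorem covN_le : ∀ {n : ℕ} {x y : α}, CovN n x y → x ≤ y
  | 0, _, _, h => le_of_eq h
  | _+1, _, _, ⟨_, hz, h⟩ => hz.le.trans (covN_le h)

theorem covN_lt {n : ℕ} {x y : α} (h : CovN (n+1) x y) : x < y := by
  obtain ⟨z, hz, h⟩ := h; exact hz.lt.trans_le (covN_le h)

theorem covN_append : ∀ {m n : ℕ} {x y z : α}, CovN m x y → CovN n y z → CovN (m+n) x z := by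
  intro m
  induction m with
  | zero => intro n x y z h h'; cases h; simpa using h'
  | succ k ih =>
    rintro n x y z ⟨w, hw, h⟩ h'
    have : CovN (k+n) w z := ih h h'
    refine (by omega : k+1+n = (k+n)+1) ▸ ⟨w, hw, this⟩

theorem covN_snoc {n : ℕ} {x y z : α} (h : CovN n x y) (h' : y ⋖ z) : CovN (n+1) x z :=
  covN_append h ⟨z, h', rfl⟩

theorem covN_top_decomp : ∀ {n : ℕ} {x y : α}, CovN (n+1) x y → ∃ w, CovN n x w ∧ w ⋖ y := by
  intro n
  induction n with
  | zero => rintro x y ⟨z, hz, h⟩; cases h; exact ⟨x, rfl, hz⟩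
  | succ k ih =>
    rintro x y ⟨z, hz, h⟩
    obtain ⟨w, hw, hwy⟩ := ih h
    exact ⟨w, ⟨z, hz, hw⟩, hwy⟩

variable (hs : IsSemimodular α)

include hs in
theorem cov_join {z a b : α} (hza : z ⋖ a) (hzb : z ⋖ b) (hab : a ≠ b) : b ⋖ a ⊔ b := by
  have h1 : a ⊓ b = z := by
    rcases hza.eq_or_eq (le_inf hza.le hzb.le) inf_le_left with h | h
    · exact h
    · exfalso
      have hab' : a ≤ b := h ▸ inf_le_right
      rcases hzb.eq_or_eq hza.le hab' with h' | h'
      · exact hza.lt.ne' h'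
      · exact hab h'
  have := hs a b (h1 ▸ hza)
  exact this

include hs in
theorem sm_step {z w : α} (hzw : z ⋖ w) (v : α) : z ⊔ v = w ⊔ v ∨ (z ⊔ v) ⋖ (w ⊔ v) := by
  have h1 : z ≤ w ⊓ (z ⊔ v) := le_inf hzw.le le_sup_left
  rcases hzw.eq_or_eq h1 inf_le_left with h | h
  · right
    have hc : (w ⊓ (z ⊔ v)) ⋖ w := by rw [h]; exact hzw
    have := hs w (z ⊔ v) hc
    have heq : w ⊔ (z ⊔ v) = w ⊔ v := by
      rw [← sup_assoc, sup_eq_left.2 hzw.le]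
    rw [heq] at this
    exact this
  · left
    have hw : w ≤ z ⊔ v := h ▸ inf_le_right
    exact le_antisymm (sup_le (hzw.le.trans le_sup_left) le_sup_right)
      (sup_le hw le_sup_right)

include hs in
theorem covN_join : ∀ {n : ℕ} {x y : α}, CovN n x y → ∀ v : α, ∃ m ≤ n, CovN m (x ⊔ v) (y ⊔ v) := by
  intro n
  induction n with
  | zero => rintro x y h v; cases h; exact ⟨0, le_rfl, rfl⟩
  | succ k ih =>
    rintro x y ⟨z, hz, h⟩ v
    obtain ⟨m, hm, hc⟩ := ih h v
    rcases sm_step hs hz v with h' | h'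
    · exact ⟨m, by omega, h' ▸ hc⟩
    · exact ⟨m+1, by omega, ⟨z ⊔ v, h', hc⟩⟩

/-- least element of a finite nonempty chain -/
theorem chain_min {s : Set α} (hf : s.Finite) (hc : IsChain (· ≤ ·) s) (hne : s.Nonempty) :
    ∃ m ∈ s, ∀ b ∈ s, m ≤ b := by
  obtain ⟨m, hm, hmin⟩ := Set.Finite.exists_minimalFor id s hf hne
  refine ⟨m, hm, fun b hb => ?_⟩
  rcases eq_or_ne m b with rfl | hne'
  · exact le_rfl
  · rcases hc hm hb hne' with h | h
    · exact h
    · have := hmin hb h; simp only [id_eq] at this; exact this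

theorem chain_max {s : Set α} (hf : s.Finite) (hc : IsChain (· ≤ ·) s) (hne : s.Nonempty) :
    ∃ m ∈ s, ∀ b ∈ s, b ≤ m := by
  obtain ⟨m, hm, hmax⟩ := Set.Finite.exists_maximalFor id s hf hne
  refine ⟨m, hm, fun b hb => ?_⟩
  rcases eq_or_ne m b with rfl | hne'
  · exact le_rfl
  · rcases hc hm hb hne' with h | h
    · have := hmax hb h; simp only [id_eq] at this; exact this
    · exact h

/-- extracting a covering chain from a finite maximal chain in an interval -/
theorem maxChainIn_covN : ∀ (N : ℕ) {C : Set α} {x y : α}, C.Finite → C.ncard ≤ N →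
    x ≤ y → MaxChainIn x y C → ∃ n, CovN n x y := by
  intro N
  induction N with
  | zero =>
    intro C x y hf hcard hxy hmax
    -- C must contain x, contradiction with ncard = 0
    exfalso
    have hx : x ∈ C := by
      have h := hmax.2.2 (insert x C) (Set.insert_subset ⟨le_rfl, hxy⟩ hmax.1)
        (hmax.2.1.insert (fun b hb _ => Or.inl (hmax.1 hb).1)) (Set.subset_insert _ _)
      rw [h]; exact Set.mem_insert _ _
    have : C.ncard = 0 := by omega
    rw [Set.ncard_eq_zero hf] at this
    simp [this] at hx
  | succ N ih =>
    intro C x y hf hcard hxy hmax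
    have hx : x ∈ C := by
      have h := hmax.2.2 (insert x C) (Set.insert_subset ⟨le_rfl, hxy⟩ hmax.1)
        (hmax.2.1.insert (fun b hb _ => Or.inl (hmax.1 hb).1)) (Set.subset_insert _ _)
      rw [h]; exact Set.mem_insert _ _
    have hy : y ∈ C := by
      have h := hmax.2.2 (insert y C) (Set.insert_subset ⟨hxy, le_rfl⟩ hmax.1)
        (hmax.2.1.insert (fun b hb _ => Or.inr (hmax.1 hb).2)) (Set.subset_insert _ _)
      rw [h]; exact Set.mem_insert _ _
    rcases eq_or_ne x y with rfl | hne
    · exact ⟨0, rfl⟩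
    · -- take the least element of C \ {x}
      have hne' : (C \ {x}).Nonempty := ⟨y, hy, hne.symm⟩
      obtain ⟨m, hm, hmin⟩ := chain_min hf.diff (hmax.2.1.mono Set.diff_subset) hne'
      have hxm : x < m := lt_of_le_of_ne (hmax.1 hm.1).1 (fun h => hm.2 h.symm)
      have hcov : x ⋖ m := by
        refine ⟨hxm, fun t ht1 ht2 => ?_⟩
        have htC : t ∈ C := by
          have h := hmax.2.2 (insert t C)
            (Set.insert_subset ⟨ht1.le, ht2.le.trans (hmax.1 hm.1).2⟩ hmax.1) ?_
            (Set.subset_insert _ _)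
          · rw [h]; exact Set.mem_insert _ _
          · refine hmax.2.1.insert (fun b hb hbt => ?_)
            rcases eq_or_ne b x with rfl | hbx
            · exact Or.inr ht1.le
            · exact Or.inl (ht2.le.trans (hmin b ⟨hb, hbx⟩))
        have : t ∈ C \ {x} := ⟨htC, fun h => (ht1.ne' h)⟩
        exact absurd (hmin t this) ht2.not_ge
      -- C \ {x} is a max chain in [m, y]
      have hmy : m ≤ y := (hmax.1 hm.1).2
      have hsub : C \ {x} ⊆ Set.Icc m y := fun e he => ⟨hmin e he, (hmax.1 he.1).2⟩
      have hmaxC' : MaxChainIn m y (C \ {x}) := by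
        refine ⟨hsub, hmax.2.1.mono Set.diff_subset, fun D hD hDc hCD => ?_⟩
        have h := hmax.2.2 (insert x D)
          (Set.insert_subset ⟨le_rfl, hxy⟩ (fun d hd => ⟨hxm.le.trans (hD hd).1, (hD hd).2⟩))
          (hDc.insert (fun b hb _ => Or.inl (hxm.le.trans (hD hb).1)))
          (by
            intro c hc
            rcases eq_or_ne c x with rfl | hcx
            · exact Set.mem_insert _ _
            · exact Set.mem_insert_of_mem _ (hCD ⟨hc, hcx⟩))
        ext d
        constructor
        · intro hd; exact hCD hd
        · intro hd
          have hdC : d ∈ insert x D := Set.mem_insert_of_mem _ hd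
          rw [← h] at hdC
          refine ⟨hdC, fun hdx => ?_⟩
          rw [Set.mem_singleton_iff] at hdx
          subst hdx
          exact absurd (hD hd).1 hxm.not_ge
      have hcard' : (C \ {x}).ncard ≤ N := by
        have := Set.ncard_diff_singleton_add_one hx hf
        omega
      obtain ⟨n, hn⟩ := ih hf.diff hcard' hmy hmaxC'
      exact ⟨n+1, m, hcov, hn⟩

variable (hd : IsDiscreteLattice α)

include hd in
theorem exists_covN {x y : α} (hxy : x ≤ y) : ∃ n, CovN n x y := by
  obtain ⟨C, hC, hf⟩ := hd x y hxy
  exact maxChainIn_covN C.ncard hf le_rfl hxy hC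

include hd hs in
theorem covN_unique : ∀ (m : ℕ) {x y : α} (n : ℕ), CovN m x y → CovN n x y → m = n := by
  intro m
  induction m using Nat.strong_induction_on with
  | _ m ih =>
    intro x y n hm hn
    match m, hm with
    | 0, hm =>
      cases hm
      match n, hn with
      | 0, _ => rfl
      | k+1, hn => exact absurd (covN_lt hn) (lt_irrefl x)
    | k+1, hm =>
      obtain ⟨a, hxa, ha⟩ := hm
      match n, hn with
      | 0, hn => cases hn; exact absurd (covN_lt ⟨a, hxa, ha⟩) (lt_irrefl x)
      | l+1, hn =>
        obtain ⟨b, hxb, hb⟩ := hn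
        rcases eq_or_ne a b with rfl | hab
        · rw [ih k (by omega) l ha hb]
        · have hac : a ⋖ a ⊔ b := by
            have := cov_join hs hxb hxa hab.symm
            rwa [sup_comm] at this
          have hbc : b ⋖ a ⊔ b := cov_join hs hxa hxb hab
          have hcy : a ⊔ b ≤ y := sup_le (covN_le ha) (covN_le hb)
          obtain ⟨j, hj⟩ := exists_covN hd hcy
          have hja : CovN (j+1) a y := ⟨a ⊔ b, hac, hj⟩
          have hk : k = j + 1 := ih k (by omega) (j+1) ha hja
          have hjb : CovN (j+1) b y := ⟨a ⊔ b, hbc, hj⟩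
          have hl : k = l := ih k (by omega) l (hk ▸ hjb) hb
          omega

open Classical in
noncomputable def delta (x y : α) : ℕ :=
  if h : ∃ n, CovN n x y then h.choose else 0

include hd in
theorem delta_covN {x y : α} (hxy : x ≤ y) : CovN (delta x y) x y := by
  have h : ∃ n, CovN n x y := exists_covN hd hxy
  rw [delta, dif_pos h]
  exact h.choose_spec

include hd hs in
theorem delta_eq {n : ℕ} {x y : α} (h : CovN n x y) : delta x y = n := by
  have hex : ∃ n, CovN n x y := ⟨n, h⟩
  rw [delta, dif_pos hex]
  exact covN_unique hs hd _ n hex.choose_spec h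

include hd hs in
theorem delta_self (x : α) : delta x x = 0 := delta_eq hs hd rfl

include hd hs in
theorem delta_add {x y z : α} (hxy : x ≤ y) (hyz : y ≤ z) :
    delta x z = delta x y + delta y z :=
  delta_eq hs hd (covN_append (delta_covN hd hxy) (delta_covN hd hyz))

include hd hs in
theorem delta_eq_zero_iff {x y : α} (hxy : x ≤ y) : delta x y = 0 ↔ x = y := by
  constructor
  · intro h
    have := delta_covN hd hxy
    rw [h] at this
    exact this
  · rintro rfl; exact delta_self hs hd x

include hd hs in
theorem delta_cov {x y : α} (h : x ⋖ y) : delta x y = 1 :=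
  delta_eq hs hd ⟨y, h, rfl⟩

end Stmt9

namespace Stmt9
variable {α : Type*} [Lattice α] (hs : IsSemimodular α) (hd : IsDiscreteLattice α)

include hs hd in
theorem chain_card_bound : ∀ (k : ℕ) {x y : α} {s : Set α}, s.Finite →
    IsChain (· ≤ ·) s → s ⊆ Set.Icc x y → delta x y ≤ k → s.ncard ≤ k + 1 := by
  intro k
  induction k with
  | zero =>
    intro x y s hf hc hsub hdel
    rcases s.eq_empty_or_nonempty with rfl | hne
    · simp
    obtain ⟨e, he⟩ := hne
    have hxy : x ≤ y := (hsub he).1.trans (hsub he).2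
    have : x = y := (delta_eq_zero_iff hs hd hxy).1 (by omega)
    subst this
    have : s ⊆ {x} := fun e he => le_antisymm (hsub he).2 (hsub he).1
    calc s.ncard ≤ ({x} : Set α).ncard := Set.ncard_le_ncard this (Set.finite_singleton x)
    _ = 1 := Set.ncard_singleton x
  | succ k ih =>
    intro x y s hf hc hsub hdel
    rcases s.eq_empty_or_nonempty with rfl | hne
    · simp
    obtain ⟨m, hm, hmin⟩ := chain_min hf hc hne
    rcases (s \ {m}).eq_empty_or_nonempty with hempty | hne'
    · have : s = {m} := by
        apply Set.eq_singleton_iff_nonempty_unique_mem.2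
        exact ⟨hne, fun e he => by
          by_contra h
          exact (Set.eq_empty_iff_forall_notMem.1 hempty e) ⟨he, h⟩⟩
      rw [this, Set.ncard_singleton]; omega
    obtain ⟨m2, hm2, hmin2⟩ := chain_min hf.diff (hc.mono Set.diff_subset) hne'
    have hmm2 : m < m2 := lt_of_le_of_ne (hmin _ hm2.1) (fun h => hm2.2 h.symm)
    have hxm2 : x < m2 := lt_of_le_of_lt (hsub hm).1 hmm2
    have hsub' : s \ {m} ⊆ Set.Icc m2 y := fun e he => ⟨hmin2 e he, (hsub he.1).2⟩
    have hd2 : delta x y = delta x m2 + delta m2 y :=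
      delta_add hs hd hxm2.le (hsub hm2.1).2
    have hpos : delta x m2 ≠ 0 := fun h => hxm2.ne ((delta_eq_zero_iff hs hd hxm2.le).1 h)
    have : delta m2 y ≤ k := by omega
    have hcard := ih hf.diff (hc.mono Set.diff_subset) hsub' this
    have := Set.ncard_diff_singleton_add_one hm hf
    omega

include hs hd in
theorem chain_Icc_finite {x y : α} {s : Set α} (hc : IsChain (· ≤ ·) s)
    (hsub : s ⊆ Set.Icc x y) : s.Finite := by
  by_contra h
  have h' : s.Infinite := h
  obtain ⟨t, hts, htc⟩ := Set.Infinite.exists_subset_card_eq h' (delta x y + 2)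
  have hb := chain_card_bound hs hd (delta x y) (t : Set α).toFinite
    (hc.mono hts) (hts.trans hsub) le_rfl
  rw [Set.ncard_coe_finset] at hb
  omega

/-- signed height difference -/
noncomputable def rho (x y : α) : ℤ := (delta x (x ⊔ y) : ℤ) - delta y (x ⊔ y)

include hs hd in
theorem rho_eq_ub {x y u : α} (hx : x ≤ u) (hy : y ≤ u) :
    rho x y = (delta x u : ℤ) - delta y u := by
  have h1 : delta x u = delta x (x ⊔ y) + delta (x ⊔ y) u :=
    delta_add hs hd le_sup_left (sup_le hx hy)
  have h2 : delta y u = delta y (x ⊔ y) + delta (x ⊔ y) u :=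
    delta_add hs hd le_sup_right (sup_le hx hy)
  rw [rho]; omega

include hs hd in
theorem rho_of_le {x y : α} (h : x ≤ y) : rho x y = delta x y := by
  rw [rho_eq_ub hs hd h le_rfl, delta_self hs hd]; omega

include hs hd in
theorem rho_trans (x y z : α) : rho x z = rho x y + rho y z := by
  have hx : x ≤ x ⊔ y ⊔ z := le_sup_left.trans le_sup_left
  have hy : y ≤ x ⊔ y ⊔ z := le_sup_right.trans le_sup_left
  have hz : z ≤ x ⊔ y ⊔ z := le_sup_right
  rw [rho_eq_ub hs hd hx hy, rho_eq_ub hs hd hy hz, rho_eq_ub hs hd hx hz]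
  omega

include hs hd in
theorem rho_self (x : α) : rho x x = 0 := by
  rw [rho_of_le hs hd le_rfl, delta_self hs hd]; simp

include hs hd in
theorem rho_comm (x y : α) : rho x y = - rho y x := by
  have := rho_trans hs hd x y x
  rw [rho_self hs hd] at this
  omega

include hs hd in
theorem rho_cov {x y : α} (h : x ⋖ y) : rho x y = 1 := by
  rw [rho_of_le hs hd h.le, delta_cov hs hd h]; simp

include hs hd in
theorem sim_rho {x y : α} (h : Sim x y) : rho x y = 0 := by
  obtain ⟨z, hzx, hzy⟩ := h
  have h1 := rho_trans hs hd x z y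
  rw [rho_comm hs hd x z, rho_cov hs hd hzx, rho_cov hs hd hzy] at h1
  omega

include hs hd in
theorem levelEquiv_rho {x y : α} (h : LevelEquiv x y) : rho x y = 0 := by
  induction h with
  | refl => exact rho_self hs hd x
  | tail _ hsim ih =>
    rename_i b c _
    rw [rho_trans hs hd x b c, ih, sim_rho hs hd hsim]; simp

include hs hd in
theorem levelEquiv_antichain {x y : α} (h : LevelEquiv x y) (hle : x ≤ y) : x = y := by
  have h1 := levelEquiv_rho hs hd h
  rw [rho_of_le hs hd hle] at h1
  exact (delta_eq_zero_iff hs hd hle).1 (by omega)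

theorem levelEquiv_symm {x y : α} (h : LevelEquiv x y) : LevelEquiv y x := by
  induction h with
  | refl => exact Relation.ReflTransGen.refl
  | tail _ hsim ih =>
    rename_i b c _
    have : Sim c b := by obtain ⟨z, h1, h2⟩ := hsim; exact ⟨z, h2, h1⟩
    exact Relation.ReflTransGen.head this ih

include hs hd in
theorem rho_levelEquiv : ∀ (n : ℕ) (x y : α), delta (x ⊓ y) x ≤ n → rho x y = 0 →
    LevelEquiv x y := by
  intro n
  induction n with
  | zero =>
    intro x y hdel hrho
    have hle : x ≤ y := by
      have : x ⊓ y = x := (delta_eq_zero_iff hs hd inf_le_left).1 (by omega)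
      rw [← this]; exact inf_le_right
    have : x = y := by
      rw [rho_of_le hs hd hle] at hrho
      exact (delta_eq_zero_iff hs hd hle).1 (by omega)
    exact this ▸ Relation.ReflTransGen.refl
  | succ n ih =>
    intro x y hdel hrho
    by_cases hxy : x ≤ y
    · have : x = y := by
        rw [rho_of_le hs hd hxy] at hrho
        exact (delta_eq_zero_iff hs hd hxy).1 (by omega)
      exact this ▸ Relation.ReflTransGen.refl
    by_cases hyx : y ≤ x
    · have : y = x := by
        rw [rho_comm hs hd, rho_of_le hs hd hyx] at hrho
        exact (delta_eq_zero_iff hs hd hyx).1 (by omega)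
      exact this ▸ Relation.ReflTransGen.refl
    -- incomparable case
    have hgx : x ⊓ y < x := lt_of_le_of_ne inf_le_left (fun h => hxy (h ▸ inf_le_right))
    have hgy : x ⊓ y < y := lt_of_le_of_ne inf_le_right (fun h => hyx (h ▸ inf_le_left))
    -- decompose chain from x⊓y to x at the top
    have hkpos : delta (x ⊓ y) x ≠ 0 :=
      fun h => hgx.ne ((delta_eq_zero_iff hs hd inf_le_left).1 h)
    obtain ⟨k', hk'⟩ := Nat.exists_eq_succ_of_ne_zero hkpos
    have hcx : CovN (k' + 1) (x ⊓ y) x := by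
      have := delta_covN hd (inf_le_left : x ⊓ y ≤ x); rwa [hk'] at this
    obtain ⟨xm, hxm, hxmx⟩ := covN_top_decomp hcx
    -- decompose chain from x⊓y to y at the bottom
    have hlpos : delta (x ⊓ y) y ≠ 0 :=
      fun h => hgy.ne ((delta_eq_zero_iff hs hd inf_le_right).1 h)
    obtain ⟨l', hl'⟩ := Nat.exists_eq_succ_of_ne_zero hlpos
    have hcy : CovN (l' + 1) (x ⊓ y) y := by
      have := delta_covN hd (inf_le_right : x ⊓ y ≤ y); rwa [hl'] at this
    obtain ⟨e1, he1, hce1⟩ := hcy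
    have he1y : e1 ≤ y := covN_le hce1
    -- e1 ⊓ xm = x ⊓ y
    have hinf : e1 ⊓ xm = x ⊓ y := by
      rcases he1.eq_or_eq (le_inf he1.le (covN_le hxm)) inf_le_left with h | h
      · exact h
      · exfalso
        have h1 : e1 ≤ xm := h ▸ inf_le_right
        have : e1 ≤ x ⊓ y := le_inf (h1.trans hxmx.le) he1y
        exact he1.lt.not_ge this
    -- semimodularity: xm ⋖ e1 ⊔ xm
    have hcov2 : xm ⋖ e1 ⊔ xm := hs e1 xm (by rw [hinf]; exact he1)
    set x2 := e1 ⊔ xm with hx2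
    have hSim : Sim x x2 := ⟨xm, hxmx, hcov2⟩
    have hrho2 : rho x2 y = 0 := by
      have h1 := rho_trans hs hd x2 x y
      have h2 : rho x2 x = 0 := by
        have := sim_rho hs hd hSim
        rw [rho_comm hs hd] at this
        omega
      omega
    -- measure decreases
    obtain ⟨m, hm, hcm⟩ := covN_join hs hxm e1
    have hg1 : x ⊓ y ⊔ e1 = e1 := sup_eq_right.2 he1.le
    have hg2 : xm ⊔ e1 = x2 := sup_comm xm e1
    rw [hg1, hg2] at hcm
    have hde : delta e1 x2 = m := delta_eq hs hd hcm
    have he1x2 : e1 ≤ x2 ⊓ y := le_inf le_sup_left he1y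
    have hdadd : delta e1 x2 = delta e1 (x2 ⊓ y) + delta (x2 ⊓ y) x2 :=
      delta_add hs hd he1x2 inf_le_left
    have hmeas : delta (x2 ⊓ y) x2 ≤ n := by omega
    have hlev := ih x2 y hmeas hrho2
    exact Relation.ReflTransGen.head hSim hlev

end Stmt9

namespace Stmt9
variable {α : Type*} [Lattice α] (hs : IsSemimodular α) (hd : IsDiscreteLattice α)

theorem maxChain_mem {C : Set α} (hC : IsMaxChain (· ≤ ·) C) {t : α}
    (h : ∀ e ∈ C, t ≤ e ∨ e ≤ t) : t ∈ C := by
  have hch : IsChain (· ≤ ·) (insert t C) := hC.1.insert (fun b hb _ => h b hb)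
  have := hC.2 hch (Set.subset_insert _ _)
  rw [this]; exact Set.mem_insert _ _

include hs hd in
theorem maxChain_succ {C : Set α} (hC : IsMaxChain (· ≤ ·) C) {f e : α}
    (hf : f ∈ C) (he : e ∈ C) (hfe : f < e) : ∃ f' ∈ C, f ⋖ f' ∧ f' ≤ e := by
  classical
  set T := {g | g ∈ C ∧ f < g ∧ g ≤ e} with hT
  have hTsub : T ⊆ Set.Icc f e := fun g hg => ⟨hg.2.1.le, hg.2.2⟩
  have hTfin : T.Finite := chain_Icc_finite hs hd (hC.1.mono (fun g hg => hg.1)) hTsub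
  have hTne : T.Nonempty := ⟨e, he, hfe, le_rfl⟩
  obtain ⟨m, hm, hmin⟩ := chain_min hTfin (hC.1.mono (fun g hg => hg.1)) hTne
  refine ⟨m, hm.1, ⟨hm.2.1, fun w hw1 hw2 => ?_⟩, hm.2.2⟩
  -- w with f < w < m : w comparable with all of C, so w ∈ C, so w ∈ T, contradiction
  have hwC : w ∈ C := by
    apply maxChain_mem hC
    intro g hg
    rcases eq_or_ne g f with rfl | hgf
    · exact Or.inr hw1.le
    rcases hC.1 hg hf hgf with h1 | h1
    · exact Or.inr (h1.trans hw1.le)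
    · -- f < g
      rcases eq_or_ne g m with rfl | hgm
      · exact Or.inl hw2.le
      rcases hC.1 hg hm.1 hgm with h2 | h2
      · -- g ≤ m : then g ≤ e? compare g with e
        rcases eq_or_ne g e with rfl | hge
        · exact Or.inl (hw2.le.trans hm.2.2)
        rcases hC.1 hg he hge with h3 | h3
        · have : g ∈ T := ⟨hg, lt_of_le_of_ne h1 (Ne.symm hgf), h3⟩
          have := hmin g this
          exact Or.inl (hw2.le.trans this)
        · exact Or.inl (hw2.le.trans (hm.2.2.trans h3))
      · exact Or.inl (hw2.le.trans h2)
  have : w ∈ T := ⟨hwC, hw1, hw2.le.trans hm.2.2⟩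
  exact absurd (hmin w this) hw2.not_ge

include hs hd in
theorem maxChain_pred {C : Set α} (hC : IsMaxChain (· ≤ ·) C) {f e : α}
    (hf : f ∈ C) (he : e ∈ C) (hfe : e < f) : ∃ f' ∈ C, f' ⋖ f ∧ e ≤ f' := by
  classical
  set T := {g | g ∈ C ∧ g < f ∧ e ≤ g} with hT
  have hTsub : T ⊆ Set.Icc e f := fun g hg => ⟨hg.2.2, hg.2.1.le⟩
  have hTfin : T.Finite := chain_Icc_finite hs hd (hC.1.mono (fun g hg => hg.1)) hTsub
  have hTne : T.Nonempty := ⟨e, he, hfe, le_rfl⟩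
  obtain ⟨m, hm, hmax⟩ := chain_max hTfin (hC.1.mono (fun g hg => hg.1)) hTne
  refine ⟨m, hm.1, ⟨hm.2.1, fun w hw1 hw2 => ?_⟩, hm.2.2⟩
  have hwC : w ∈ C := by
    apply maxChain_mem hC
    intro g hg
    rcases eq_or_ne g f with rfl | hgf
    · exact Or.inl hw2.le
    rcases hC.1 hg hf hgf with h1 | h1
    · -- g ≤ f, g ≠ f
      rcases eq_or_ne g m with rfl | hgm
      · exact Or.inr hw1.le
      rcases hC.1 hg hm.1 hgm with h2 | h2
      · exact Or.inr (h2.trans hw1.le)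
      · -- m ≤ g < f : compare g with e
        rcases eq_or_ne g e with rfl | hge
        · exact Or.inr (hm.2.2.trans hw1.le)
        rcases hC.1 hg he hge with h3 | h3
        · exact Or.inr ((h3.trans hm.2.2).trans hw1.le)
        · have : g ∈ T := ⟨hg, lt_of_le_of_ne h1 hgf, h3⟩
          have := hmax g this
          exact Or.inr (this.trans hw1.le)
    · exact Or.inl (hw2.le.trans h1)
  have : w ∈ T := ⟨hwC, hw2, hm.2.2.trans hw1.le⟩
  exact absurd (hmax w this) hw1.not_ge

include hs hd in
theorem exists_crossing {C : Set α} (hC : IsMaxChain (· ≤ ·) C) (a : α) :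
    ∃ c ∈ C, rho a c = 0 := by
  have hCne : C.Nonempty := by
    rcases C.eq_empty_or_nonempty with rfl | h
    · exfalso
      have h1 : IsChain (· ≤ ·) ({a} : Set α) := Set.Subsingleton.isChain (Set.subsingleton_singleton)
      have := hC.2 h1 (Set.empty_subset _)
      exact (Set.singleton_ne_empty a) this.symm
    · exact h
  obtain ⟨c0, hc0⟩ := hCne
  suffices h : ∀ (k : ℕ) (c : α), c ∈ C → (rho a c).natAbs ≤ k → ∃ c' ∈ C, rho a c' = 0 by
    exact h (rho a c0).natAbs c0 hc0 le_rfl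
  intro k
  induction k with
  | zero =>
    intro c hc habs
    exact ⟨c, hc, by omega⟩
  | succ k ih =>
    intro c hc habs
    rcases lt_trichotomy (rho a c) 0 with hlt | heq | hgt
    · -- c below a's level: move up
      have hex : ∃ e ∈ C, c < e := by
        by_contra hne
        push_neg at hne
        -- c is the top of C, hence maximal in α, hence a ≤ c
        have hcmax : ∀ t, ¬ c < t := by
          intro t ht
          have htC : t ∈ C := by
            apply maxChain_mem hC
            intro g hg
            rcases eq_or_ne g c with rfl | hgc
            · exact Or.inr ht.le
            rcases hC.1 hg hc hgc with h1 | h1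
            · exact Or.inr (h1.trans ht.le)
            · exact absurd (lt_of_le_of_ne h1 (Ne.symm hgc)) (hne g hg)
          exact (hne t htC) ht
        have hac : a ≤ c := by
          have h1 : a ⊔ c = c := by
            by_contra h
            exact hcmax (a ⊔ c) (lt_of_le_of_ne le_sup_right (Ne.symm h))
          exact sup_eq_right.1 h1
        have := rho_eq_ub hs hd hac le_rfl
        rw [delta_self hs hd] at this
        omega
      obtain ⟨e, he, hce⟩ := hex
      obtain ⟨c', hc', hcov, _⟩ := maxChain_succ hs hd hC hc he hce
      have : rho a c' = rho a c + 1 := by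
        have h1 := rho_trans hs hd a c c'
        rw [rho_cov hs hd hcov] at h1
        omega
      exact ih c' hc' (by omega)
    · exact ⟨c, hc, heq⟩
    · -- c above a's level: move down
      have hex : ∃ e ∈ C, e < c := by
        by_contra hne
        push_neg at hne
        have hcmin : ∀ t, ¬ t < c := by
          intro t ht
          have htC : t ∈ C := by
            apply maxChain_mem hC
            intro g hg
            rcases eq_or_ne g c with rfl | hgc
            · exact Or.inl ht.le
            rcases hC.1 hg hc hgc with h1 | h1
            · exact absurd (lt_of_le_of_ne h1 hgc) (hne g hg)
            · exact Or.inl (ht.le.trans h1)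
          exact (hne t htC) ht
        have hca : c ≤ a := by
          have h1 : a ⊓ c = c := by
            by_contra h
            exact hcmin (a ⊓ c) (lt_of_le_of_ne inf_le_right h)
          exact inf_eq_right.1 h1
        have := rho_eq_ub hs hd le_rfl hca
        rw [delta_self hs hd] at this
        have hd0 : (0:ℤ) ≤ delta c a := Int.ofNat_nonneg _
        omega
      obtain ⟨e, he, hce⟩ := hex
      obtain ⟨c', hc', hcov, _⟩ := maxChain_pred hs hd hC hc he hce
      have : rho a c' = rho a c - 1 := by
        have h1 := rho_trans hs hd a c' c
        rw [rho_cov hs hd hcov] at h1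
        omega
      exact ih c' hc' (by omega)

end Stmt9

namespace Stmt9
variable {α : Type*} [Lattice α] (hs : IsSemimodular α) (hd : IsDiscreteLattice α)

include hs hd in
/-- Given a maximal chain `C` through `z ⋖ y`, with `x`, `y` distinct covers of `z`,
and `v ∈ {x, y}`, the set `L0 ∪ {v} ∪ (x ⊔ ·)''U` is a maximal chain. -/
theorem genMax {C : Set α} (hC : IsMaxChain (· ≤ ·) C) {z x y : α}
    (hzC : z ∈ C) (hyC : y ∈ C) (hzy : z ⋖ y) (hxy : ¬ x ≤ y)
    {v : α} (hzv : z ⋖ v) (hvxy : v ⋖ x ⊔ y) (hvle : ∀ e ∈ C, y ≤ e → v ≤ x ⊔ e) :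
    IsMaxChain (· ≤ ·)
      ({e | e ∈ C ∧ e ≤ z} ∪ ({v} ∪ {w | ∃ e, (e ∈ C ∧ y ≤ e) ∧ w = x ⊔ e})) := by
  classical
  set S := ({e | e ∈ C ∧ e ≤ z} ∪ ({v} ∪ {w | ∃ e, (e ∈ C ∧ y ≤ e) ∧ w = x ⊔ e})) with hS
  -- split property of C
  have hsplit : ∀ e ∈ C, e ≤ z ∨ y ≤ e := by
    intro e he
    rcases eq_or_ne e z with rfl | hez
    · exact Or.inl le_rfl
    rcases hC.1 he hzC hez with h1 | h1
    · exact Or.inl h1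
    rcases eq_or_ne e y with rfl | hey
    · exact Or.inr le_rfl
    rcases hC.1 he hyC hey with h2 | h2
    · rcases hzy.eq_or_eq h1 h2 with h3 | h3
      · exact Or.inl h3.le
      · exact Or.inr h3.ge
    · exact Or.inr h2
  -- comparability of any t with all of S, given t is to be located
  have hloc : ∀ t, (∀ s ∈ S, t ≤ s ∨ s ≤ t) → t ∈ S := by
    intro t ht
    have hzS : z ∈ S := Or.inl ⟨hzC, le_rfl⟩
    have hvS : v ∈ S := Or.inr (Or.inl rfl)
    have hxyS : x ⊔ y ∈ S := Or.inr (Or.inr ⟨y, ⟨hyC, le_rfl⟩, rfl⟩)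
    by_cases htz : t ≤ z
    · -- t is comparable with all of C
      have htC : t ∈ C := by
        apply maxChain_mem hC
        intro e he
        rcases hsplit e he with h1 | h1
        · exact ht e (Or.inl ⟨he, h1⟩)
        · exact Or.inl (htz.trans (hzy.le.trans h1))
      exact Or.inl ⟨htC, htz⟩
    · have hzt : z < t := by
        rcases ht z hzS with h | h
        · exact absurd h htz
        · exact lt_of_le_of_ne h (fun hh => htz (hh ▸ le_rfl))
      rcases ht v hvS with htv | hvt
      · rcases hzv.eq_or_eq hzt.le htv with h | h
        · exact absurd h hzt.ne'
        · exact h ▸ hvS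
      rcases ht (x ⊔ y) hxyS with htxy | hxyt
      · rcases hvxy.eq_or_eq hvt htxy with h | h
        · exact h ▸ hvS
        · exact h ▸ hxyS
      -- now x ⊔ y ≤ t
      by_cases hall : ∀ e ∈ C, y ≤ e → x ⊔ e ≤ t
      · have htC : t ∈ C := by
          apply maxChain_mem hC
          intro e he
          rcases hsplit e he with h1 | h1
          · exact Or.inr (h1.trans (hzy.le.trans (le_sup_right.trans hxyt)))
          · exact Or.inr ((le_sup_right.trans (hall e he h1)))
        have hyt : y ≤ t := by
          rcases hsplit t htC with h | h
          · exact absurd h htz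
          · exact h
        have : x ⊔ t = t := sup_eq_right.2 (le_sup_left.trans (hall t htC hyt))
        exact Or.inr (Or.inr ⟨t, ⟨htC, hyt⟩, this.symm⟩)
      · push_neg at hall
        obtain ⟨e', he'C, he'y, he'nle⟩ := hall
        set P := {g | g ∈ C ∧ y ≤ g ∧ g ≤ e' ∧ x ⊔ g ≤ t} with hP
        have hPchain : IsChain (· ≤ ·) P := hC.1.mono (fun g hg => hg.1)
        have hPfin : P.Finite := chain_Icc_finite hs hd hPchain
          (fun g hg => ⟨hg.2.1, hg.2.2.1⟩)
        have hPne : P.Nonempty := ⟨y, hyC, le_rfl, he'y, hxyt⟩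
        obtain ⟨f, hfP, hfmax⟩ := chain_max hPfin hPchain hPne
        have hfe' : f < e' := lt_of_le_of_ne hfP.2.2.1 (by
          rintro rfl; exact he'nle hfP.2.2.2)
        obtain ⟨f', hf'C, hff', hf'e'⟩ := maxChain_succ hs hd hC hfP.1 he'C hfe'
        have hyf' : y ≤ f' := hfP.2.1.trans hff'.le
        have hf'nle : ¬ x ⊔ f' ≤ t := by
          intro h
          exact hff'.lt.not_ge (hfmax f' ⟨hf'C, hyf', hf'e', h⟩)
        have htf' : t ≤ x ⊔ f' := by
          rcases ht (x ⊔ f') (Or.inr (Or.inr ⟨f', ⟨hf'C, hyf'⟩, rfl⟩)) with h | h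
          · exact h
          · exact absurd h hf'nle
        rcases sm_step hs hff' x with h | h
        · exfalso
          apply hf'nle
          rw [sup_comm x f', ← h, sup_comm f x]
          exact hfP.2.2.2
        · have h' : (x ⊔ f) ⋖ (x ⊔ f') := by
            rwa [sup_comm f x, sup_comm f' x] at h
          rcases h'.eq_or_eq hfP.2.2.2 htf' with heq | heq
          · exact heq ▸ Or.inr (Or.inr ⟨f, ⟨hfP.1, hfP.2.1⟩, rfl⟩)
          · exact (hf'nle heq.ge).elim
  -- S is a chain
  have hSchain : IsChain (· ≤ ·) S := by
    intro s hs' t ht' hst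
    have key : ∀ p ∈ S, ∀ q ∈ S, p ≤ q ∨ q ≤ p ∨ p = q := by
      intro p hp q hq
      rcases hp with ⟨hpC, hpz⟩ | hp
      · rcases hq with ⟨hqC, hqz⟩ | hq
        · rcases eq_or_ne p q with rfl | hpq
          · exact Or.inr (Or.inr rfl)
          · exact (hC.1 hpC hqC hpq).imp id Or.inl
        · rcases hq with rfl | ⟨e, ⟨heC, hey⟩, rfl⟩
          · exact Or.inl (hpz.trans hzv.le)
          · exact Or.inl (hpz.trans (hzy.le.trans (hey.trans le_sup_right)))
      · rcases hp with rfl | ⟨e, ⟨heC, hey⟩, rfl⟩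
        · rcases hq with ⟨hqC, hqz⟩ | hq
          · exact Or.inr (Or.inl (hqz.trans hzv.le))
          · rcases hq with rfl | ⟨e, ⟨heC, hey⟩, rfl⟩
            · exact Or.inr (Or.inr rfl)
            · exact Or.inl (hvle e heC hey)
        · rcases hq with ⟨hqC, hqz⟩ | hq
          · exact Or.inr (Or.inl (hqz.trans (hzy.le.trans (hey.trans le_sup_right))))
          · rcases hq with rfl | ⟨e', ⟨he'C, he'y⟩, rfl⟩
            · exact Or.inr (Or.inl (hvle e heC hey))
            · rcases eq_or_ne e e' with rfl | hee'
              · exact Or.inr (Or.inr rfl)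
              · rcases hC.1 heC he'C hee' with h | h
                · exact Or.inl (sup_le_sup_left h x)
                · exact Or.inr (Or.inl (sup_le_sup_left h x))
    rcases key s hs' t ht' with h | h | h
    · exact Or.inl h
    · exact Or.inr h
    · exact absurd h hst
  refine ⟨hSchain, fun D hD hSD => ?_⟩
  apply Set.Subset.antisymm hSD
  intro d hdD
  apply hloc d
  intro s hsS
  rcases eq_or_ne d s with rfl | hds
  · exact Or.inl le_rfl
  · exact hD hdD (hSD hsS) hds

include hs hd in
/-- An antichain cutset is closed under `Sim`. -/
theorem claimS {A : Set α}
    (hA : ∀ C : Set α, IsMaxChain (· ≤ ·) C → ∃ x : α, A ∩ C = {x})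
    {x y : α} (hx : x ∈ A) (hsim : Sim x y) : y ∈ A := by
  classical
  rcases eq_or_ne x y with rfl | hne
  · exact hx
  by_contra hy
  obtain ⟨z, hzx, hzy⟩ := hsim
  have hnxy : ¬ x ≤ y := by
    intro h
    rcases hzy.eq_or_eq hzx.le h with h' | h'
    · exact hzx.lt.ne' h'
    · exact hne h'
  have hnyx : ¬ y ≤ x := by
    intro h
    rcases hzx.eq_or_eq hzy.le h with h' | h'
    · exact hzy.lt.ne' h'
    · exact hne h'.symm
  have hxcov : x ⋖ x ⊔ y := by
    have := cov_join hs hzy hzx hne.symm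
    rwa [sup_comm y x] at this
  have hycov : y ⋖ x ⊔ y := cov_join hs hzx hzy hne
  -- a maximal chain through z and y
  have hchainzy : IsChain (· ≤ ·) ({z, y} : Set α) := by
    intro a ha b hb hab
    rcases ha with rfl | ha <;> rcases hb with rfl | hb
    · exact absurd rfl hab
    · rw [Set.mem_singleton_iff] at hb; subst hb; exact Or.inl hzy.le
    · rw [Set.mem_singleton_iff] at ha; subst ha; exact Or.inr hzy.le
    · rw [Set.mem_singleton_iff] at ha hb; subst ha; subst hb; exact absurd rfl hab
  obtain ⟨C, hC, hsubC⟩ := hchainzy.exists_maxChain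
  have hzC : z ∈ C := hsubC (Set.mem_insert _ _)
  have hyC : y ∈ C := hsubC (Set.mem_insert_of_mem _ rfl)
  -- two maximal chains
  have hQ := genMax hs hd hC hzC hyC hzy hnxy hzx hxcov
    (fun e _ hye => le_sup_left.trans (sup_le_sup_left hye x))
  have hY := genMax hs hd hC hzC hyC hzy hnxy hzy hycov
    (fun e _ hye => hye.trans le_sup_right)
  obtain ⟨q, hq⟩ := hA _ hQ
  obtain ⟨w, hw⟩ := hA _ hY
  -- x is the crossing point of Q
  have hxQ : x ∈ A ∩ ({e | e ∈ C ∧ e ≤ z} ∪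
      ({x} ∪ {w | ∃ e, (e ∈ C ∧ y ≤ e) ∧ w = x ⊔ e})) := ⟨hx, Or.inr (Or.inl rfl)⟩
  rw [hq] at hxQ
  rw [Set.mem_singleton_iff] at hxQ
  subst hxQ
  -- analyse the crossing point w of Y
  have hwY : w ∈ A ∩ ({e | e ∈ C ∧ e ≤ z} ∪
      ({y} ∪ {w | ∃ e, (e ∈ C ∧ y ≤ e) ∧ w = x ⊔ e})) := by rw [hw]; rfl
  obtain ⟨hwA, hwmem⟩ := hwY
  rcases hwmem with ⟨hwC, hwz⟩ | hwmem
  · -- w ≤ z, but w ∈ A ∩ Q forces w = q = x, contradiction with z < x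
    have : w ∈ A ∩ ({e | e ∈ C ∧ e ≤ z} ∪
        ({x} ∪ {w | ∃ e, (e ∈ C ∧ y ≤ e) ∧ w = x ⊔ e})) := ⟨hwA, Or.inl ⟨hwC, hwz⟩⟩
    rw [hq] at this
    rw [Set.mem_singleton_iff] at this
    subst this
    exact hzx.lt.not_ge hwz
  rcases hwmem with rfl | ⟨e, ⟨heC, hey⟩, rfl⟩
  · exact hy hwA
  · have : x ⊔ e ∈ A ∩ ({e | e ∈ C ∧ e ≤ z} ∪
        ({x} ∪ {w | ∃ e, (e ∈ C ∧ y ≤ e) ∧ w = x ⊔ e})) :=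
      ⟨hwA, Or.inr (Or.inr ⟨e, ⟨heC, hey⟩, rfl⟩)⟩
    rw [hq] at this
    rw [Set.mem_singleton_iff] at this
    have hyx' : y ≤ x := hey.trans (le_sup_right.trans this.le)
    exact hnyx hyx'

end Stmt9

theorem stmt9 {α : Type*} [Lattice α] (hd : IsDiscreteLattice α) (hs : IsSemimodular α)
    (A : Set α) :
    (∀ C : Set α, IsMaxChain (· ≤ ·) C → ∃ x : α, A ∩ C = {x}) ↔
      ∃ a : α, A = {x : α | LevelEquiv a x} := by
  classical
  constructor
  · intro hA
    have hclose : ∀ {p q : α}, Relation.ReflTransGen Sim p q → p ∈ A → q ∈ A := by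
      intro p q h hp
      induction h with
      | refl => exact hp
      | tail _ hsim ih => exact Stmt9.claimS hs hd hA ih hsim
    -- get an element of A
    have hemp : IsChain (· ≤ ·) (∅ : Set α) := fun a ha => absurd ha (Set.notMem_empty a)
    obtain ⟨C0, hC0, -⟩ := hemp.exists_maxChain
    obtain ⟨a, ha⟩ := hA C0 hC0
    have haA : a ∈ A := by
      have : a ∈ A ∩ C0 := by rw [ha]; rfl
      exact this.1
    refine ⟨a, ?_⟩
    ext u
    simp only [Set.mem_setOf_eq]
    constructor
    · intro huA
      have hu : IsChain (· ≤ ·) ({u} : Set α) := Set.subsingleton_singleton.isChain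
      obtain ⟨Cu, hCu, hsubu⟩ := hu.exists_maxChain
      have huC : u ∈ Cu := hsubu rfl
      obtain ⟨c, hcC, hrho⟩ := Stmt9.exists_crossing hs hd hCu a
      have hlev : LevelEquiv a c :=
        Stmt9.rho_levelEquiv hs hd (Stmt9.delta (a ⊓ c) a) a c le_rfl hrho
      have hcA : c ∈ A := hclose hlev haA
      obtain ⟨t, htA⟩ := hA Cu hCu
      have h1 : u = t := by
        have : u ∈ A ∩ Cu := ⟨huA, huC⟩
        rw [htA] at this; exact this
      have h2 : c = t := by
        have : c ∈ A ∩ Cu := ⟨hcA, hcC⟩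
        rw [htA] at this; exact this
      rw [h1, ← h2]
      exact hlev
    · intro hlev
      exact hclose hlev haA
  · rintro ⟨a, rfl⟩
    intro C hC
    obtain ⟨c, hcC, hrho⟩ := Stmt9.exists_crossing hs hd hC a
    have hlevc : LevelEquiv a c :=
      Stmt9.rho_levelEquiv hs hd (Stmt9.delta (a ⊓ c) a) a c le_rfl hrho
    refine ⟨c, ?_⟩
    ext u
    constructor
    · rintro ⟨huA, huC⟩
      have hlevu : LevelEquiv a u := huA
      have hlevcu : LevelEquiv c u :=
        (Stmt9.levelEquiv_symm hlevc).trans hlevu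
      rcases eq_or_ne u c with rfl | hne
      · rfl
      rcases hC.1 huC hcC hne with h | h
      · exact Set.mem_singleton_iff.2
          (Stmt9.levelEquiv_antichain hs hd (Stmt9.levelEquiv_symm hlevcu) h)
      · exact Set.mem_singleton_iff.2
          (Stmt9.levelEquiv_antichain hs hd hlevcu h).symm
    · intro hu
      rw [Set.mem_singleton_iff] at hu
      subst hu
      exact ⟨hlevc, hcC⟩
end

section
/- In a finite semimodular lattice (with least element 0), the level classes coincide with the nonempty height sets L_n = {x : h(x) = n}, where h(x) is the height of x above 0. -/
section Aux

variable {α : Type*} [Lattice α]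

/-- Any chain in an interval extends to a maximal chain (Zorn). -/
lemma exists_maxChainIn (x y : α) (C0 : Set α) (hC0 : C0 ⊆ Set.Icc x y)
    (hch : IsChain (· ≤ ·) C0) : ∃ C : Set α, MaxChainIn x y C ∧ C0 ⊆ C := by
  let S : Set (Set α) := {D | D ⊆ Set.Icc x y ∧ IsChain (· ≤ ·) D}
  have key : ∀ c ⊆ S, IsChain (· ⊆ ·) c → c.Nonempty →
      ∃ ub ∈ S, ∀ s ∈ c, s ⊆ ub := by
    intro c hcS hc _
    refine ⟨⋃₀ c, ⟨?_, ?_⟩, fun s hs => Set.subset_sUnion_of_mem hs⟩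
    · exact Set.sUnion_subset fun s hs => (hcS hs).1
    · intro a ha b hb hab
      obtain ⟨s, hs, has⟩ := ha
      obtain ⟨t, ht, hbt⟩ := hb
      rcases hc.total hs ht with hst | hts
      · exact (hcS ht).2 (hst has) hbt hab
      · exact (hcS hs).2 has (hts hbt) hab
  obtain ⟨m, hm0, hmS, hmax⟩ := zorn_subset_nonempty S key C0 ⟨hC0, hch⟩
  exact ⟨m, ⟨hmS.1, hmS.2, fun D hD1 hD2 hD3 =>
    ((hmax ⟨hD1, hD2⟩ hD3).antisymm hD3).symm⟩, hm0⟩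

lemma MaxChainIn.mem_of_comparable {x y z : α} {C : Set α} (hC : MaxChainIn x y C)
    (hz : z ∈ Set.Icc x y) (hcomp : ∀ c ∈ C, z ≤ c ∨ c ≤ z) : z ∈ C := by
  have h2 := hC.2.2 (insert z C) (Set.insert_subset hz hC.1)
    (hC.2.1.insert fun b hb _ => hcomp b hb) (Set.subset_insert _ _)
  have h3 : z ∈ insert z C := Set.mem_insert _ _
  rwa [← h2] at h3

variable [OrderBot α]

lemma MaxChainIn.bot_mem {x : α} {C : Set α} (hC : MaxChainIn ⊥ x C) : (⊥ : α) ∈ C :=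
  hC.mem_of_comparable ⟨le_rfl, bot_le⟩ fun c _ => Or.inl bot_le

lemma MaxChainIn.top_mem {x : α} {C : Set α} (hC : MaxChainIn ⊥ x C) : x ∈ C :=
  hC.mem_of_comparable ⟨bot_le, le_rfl⟩ fun c hc => Or.inr (hC.1 hc).2

variable [Fintype α] (h : α → ℕ)
  (hh : ∀ x : α, ∀ C : Set α, MaxChainIn ⊥ x C → (C \ {(⊥ : α)}).ncard = h x)

lemma exists_covBy_lt' {x y : α} (hxy : x < y) : ∃ z, x ≤ z ∧ z ⋖ y := by
  obtain ⟨z, hz, hzmax⟩ := Set.Finite.exists_maximalFor (id : α → α) {t : α | x ≤ t ∧ t < y}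
    (Set.toFinite _) ⟨x, le_rfl, hxy⟩
  refine ⟨z, hz.1, hz.2, fun c hzc hcy => ?_⟩
  exact absurd (le_antisymm hzc.le (hzmax (j := c) ⟨hz.1.trans hzc.le, hcy⟩ hzc.le)) hzc.ne

include hh

lemma h_bot : h ⊥ = 0 := by
  obtain ⟨C, hC, -⟩ := exists_maxChainIn (⊥ : α) ⊥ ∅ (Set.empty_subset _) IsChain.empty
  have hsub : C ⊆ {(⊥ : α)} := by
    intro c hc; have := hC.1 hc; exact le_antisymm this.2 this.1
  have := hh ⊥ C hC
  rw [← this, Set.diff_eq_empty.2 hsub, Set.ncard_empty]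

lemma h_covBy {x y : α} (hxy : x ⋖ y) : h y = h x + 1 := by
  obtain ⟨C, hC, -⟩ := exists_maxChainIn (⊥ : α) x ∅ (Set.empty_subset _) IsChain.empty
  have hxC : x ∈ C := hC.top_mem
  have hynC : y ∉ C := fun hy => hxy.lt.not_ge (hC.1 hy).2
  have hCy : MaxChainIn ⊥ y (insert y C) := by
    refine ⟨Set.insert_subset ⟨bot_le, le_rfl⟩
      (hC.1.trans (Set.Icc_subset_Icc_right hxy.le)), ?_, ?_⟩
    · exact hC.2.1.insert fun b hb _ => Or.inr ((hC.1 hb).2.trans hxy.le)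
    · intro D hD1 hD2 hD3
      refine Set.Subset.antisymm hD3 fun d hd => ?_
      rcases hD2.total hd (hD3 (Set.mem_insert_of_mem _ hxC)) with hdx | hxd
      · have : C = insert d C := hC.2.2 _ (Set.insert_subset ⟨bot_le, hdx⟩ hC.1)
          (hD2.mono (Set.insert_subset hd (fun c hc => hD3 (Set.mem_insert_of_mem _ hc))))
          (Set.subset_insert _ _)
        exact Set.mem_insert_of_mem _ (this ▸ Set.mem_insert d C)
      · rcases hxy.eq_or_eq hxd (hD1 hd).2 with rfl | rfl
        · exact Set.mem_insert_of_mem _ hxC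
        · exact Set.mem_insert _ _
  have hyne : y ≠ ⊥ := (bot_le.trans_lt hxy.lt).ne'
  have := hh y _ hCy
  rw [← this, ← hh x C hC]
  rw [Set.insert_diff_of_notMem _ (by simpa using hyne)]
  rw [Set.ncard_insert_of_notMem (fun hy => hynC hy.1) (Set.toFinite _)]

lemma h_strictMono : ∀ n : ℕ, ∀ y : α, h y = n → ∀ x, x < y → h x < h y := by
  intro n
  induction n using Nat.strong_induction_on with
  | _ n ih =>
    intro y hy x hxy
    obtain ⟨z, hxz, hzy⟩ := exists_covBy_lt' hxy
    have hzy' := h_covBy h hh hzy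
    rcases hxz.lt_or_eq with hlt | rfl
    · have : h x < h z := ih (h z) (by omega) z rfl x hlt
      omega
    · omega

lemma h_eq_zero {x : α} (hx : h x = 0) : x = ⊥ := by
  by_contra hne
  have : h ⊥ < h x := h_strictMono h hh (h x) x rfl ⊥ (bot_le.lt_of_ne (Ne.symm hne))
  omega

lemma exists_covby_self {x : α} (hx : x ≠ ⊥) : ∃ z, z ⋖ x := by
  obtain ⟨z, hz, hzy⟩ := exists_covBy_lt' (bot_le.lt_of_ne (Ne.symm hx))
  exact ⟨z, hzy⟩

end Aux

section Sim

variable {α : Type*} [Lattice α] (hs : IsSemimodular α)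

include hs

lemma sim_exists_covBy {b c : α} (hbc : Sim b c) (hne : b ≠ c) :
    ∃ s : α, b ⋖ s ∧ c ⋖ s := by
  obtain ⟨w, hwb, hwc⟩ := hbc
  have hinf : b ⊓ c = w := by
    rcases hwb.eq_or_eq (le_inf hwb.le hwc.le) inf_le_left with he | he
    · exact he
    · exfalso
      have hblec : b ≤ c := he ▸ inf_le_right
      have : w < b := hwb.lt
      exact hwc.2 this (hblec.lt_of_ne hne)
  refine ⟨b ⊔ c, ?_, ?_⟩
  · have := hs c b (by rwa [inf_comm c b, hinf])
    rwa [sup_comm c b] at this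
  · exact hs b c (hinf ▸ hwb)

lemma levelEquiv_of_covBy {a b : α} (hab : Relation.ReflTransGen Sim a b) :
    ∀ x y : α, a ⋖ x → b ⋖ y → LevelEquiv x y := by
  induction hab with
  | refl =>
    intro x y hax hay
    rcases eq_or_ne x y with rfl | hne
    · exact Relation.ReflTransGen.refl
    · exact Relation.ReflTransGen.single ⟨_, hax, hay⟩
  | tail hab hbc ih =>
    rename_i b c
    intro x y hax hcy
    rcases eq_or_ne b c with rfl | hne
    · exact ih x y hax hcy
    · obtain ⟨s, hbs, hcs⟩ := sim_exists_covBy hs hbc hne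
      have h1 : LevelEquiv x s := ih x s hax hbs
      rcases eq_or_ne s y with rfl | hsy
      · exact h1
      · exact h1.tail ⟨c, hcs, hcy⟩

end Sim

theorem stmt10 {α : Type*} [Lattice α] [OrderBot α] [Fintype α]
    (hs : IsSemimodular α)
    (h : α → ℕ)
    (hh : ∀ x : α, ∀ C : Set α, MaxChainIn ⊥ x C → (C \ {(⊥ : α)}).ncard = h x)
    (A : Set α) :
    (∃ a : α, A = {x : α | LevelEquiv a x}) ↔
      ∃ n : ℕ, (∃ x : α, h x = n) ∧ A = {x : α | h x = n} := by
  -- Sim preserves h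
  have hsim : ∀ x y : α, Sim x y → h x = h y := by
    rintro x y ⟨z, hzx, hzy⟩
    rw [h_covBy h hh hzx, h_covBy h hh hzy]
  have hlev : ∀ x y : α, LevelEquiv x y → h x = h y := by
    intro x y hxy
    induction hxy with
    | refl => rfl
    | tail _ hbc ih => exact ih.trans (hsim _ _ hbc)
  -- same height implies LevelEquiv
  have hconv : ∀ n : ℕ, ∀ x y : α, h x = n → h y = n → LevelEquiv x y := by
    intro n
    induction n with
    | zero =>
      intro x y hx hy
      rw [h_eq_zero h hh hx, h_eq_zero h hh hy]
      exact Relation.ReflTransGen.refl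
    | succ n ih =>
      intro x y hx hy
      have hxne : x ≠ ⊥ := fun he => by rw [he, h_bot h hh] at hx; omega
      have hyne : y ≠ ⊥ := fun he => by rw [he, h_bot h hh] at hy; omega
      obtain ⟨x', hx'⟩ := exists_covby_self h hh hxne
      obtain ⟨y', hy'⟩ := exists_covby_self h hh hyne
      have hhx' : h x' = n := by have := h_covBy h hh hx'; omega
      have hhy' : h y' = n := by have := h_covBy h hh hy'; omega
      exact levelEquiv_of_covBy hs (ih x' y' hhx' hhy') x y hx' hy'
  constructor
  · rintro ⟨a, rfl⟩
    refine ⟨h a, ⟨a, rfl⟩, ?_⟩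
    ext x
    simp only [Set.mem_setOf_eq]
    exact ⟨fun hx => (hlev a x hx).symm, fun hx => hconv (h a) a x rfl hx⟩
  · rintro ⟨n, ⟨x0, hx0⟩, rfl⟩
    refine ⟨x0, ?_⟩
    ext x
    simp only [Set.mem_setOf_eq]
    exact ⟨fun hx => hconv n x0 x hx0 hx, fun hx => (hlev x0 x hx).symm.trans hx0⟩
end
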